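/- arXiv:2511.18952 — 2 statements merged into one kernel-verified Lean document; each statement's English description precedes it below -/
import Mathlib

section
/- A graph G contains k pairwise edge-disjoint spanning trees if and only if ν_f(G) ≥ k, where ν_f(G) is the fractional packing number of G. -/
/-!
Graphs may have parallel edges but no loops.  We model a graph `G = (V, E)` by a finite
vertex type `V`, a finite edge type `β` and a map `ends : β → Sym2 V` giving the pair of
endpoints of each edge, with `¬(ends e).IsDiag` (no loops).  Subgraphs spanning `V` are
given by their edge sets (`Finset β`).
-/

attribute [local instance] Classical.propDecidable

/-- `u` and `w` are joined by an edge of the edge set `F`. -/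
def GStep {V β : Type} (ends : β → Sym2 V) (F : Finset β) (u w : V) : Prop :=
  ∃ e ∈ F, ends e = s(u, w)

/-- `u` and `w` are joined by a walk using edges of `F`. -/
def GReach {V β : Type} (ends : β → Sym2 V) (F : Finset β) (u w : V) : Prop :=
  Relation.ReflTransGen (GStep ends F) u w

/-- `E(X)` relative to the edge set `F`: edges of `F` with both endpoints in `X`. -/
noncomputable def edgesIn {V β : Type} (ends : β → Sym2 V) (F : Finset β) (X : Finset V) :
    Finset β :=
  F.filter fun e => ∀ v ∈ ends e, v ∈ X

/-- An edge set `F` is a (spanning) forest iff it is acyclic, equivalently iff every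
nonempty vertex set `X` spans at most `|X| - 1` edges of `F`. -/
def IsForest {V β : Type} (ends : β → Sym2 V) (F : Finset β) : Prop :=
  ∀ X : Finset V, X.Nonempty → (edgesIn ends F X).card ≤ X.card - 1

/-- An edge set `F` is a spanning tree iff it is a connected spanning forest. -/
def IsSpanningTree {V β : Type} (ends : β → Sym2 V) (F : Finset β) : Prop :=
  IsForest ends F ∧ ∀ u w : V, GReach ends F u w
/-- A partition of the vertex set: pairwise disjoint nonempty classes covering `V`. -/
def IsVPartition {V : Type} [Fintype V] (P : Finset (Finset V)) : Prop :=
  (∀ X ∈ P, X.Nonempty) ∧ (∀ X ∈ P, ∀ Y ∈ P, X ≠ Y → Disjoint X Y) ∧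
    P.biUnion id = (Finset.univ : Finset V)

/-- `E(P)`: the edges whose endpoints lie in different classes of the partition `P`. -/
noncomputable def crossEdges {V β : Type} [Fintype β] (ends : β → Sym2 V)
    (P : Finset (Finset V)) : Finset β :=
  Finset.univ.filter fun e => ¬ ∃ X ∈ P, ∀ v ∈ ends e, v ∈ X


namespace NWT

section KER
variable {α γ δ : Type} [DecidableEq γ] [DecidableEq δ]

lemma image_card_le_of_ker (s : Finset α) (f : α → γ) (g : α → δ)
    (h : ∀ a ∈ s, ∀ b ∈ s, g a = g b → f a = f b) :
    (s.image f).card ≤ (s.image g).card := by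
  rcases s.eq_empty_or_nonempty with rfl | ⟨a₀, ha₀⟩
  · simp
  · set u : δ → γ := fun d => if hd : ∃ a, a ∈ s ∧ g a = d then f hd.choose else f a₀ with hu
    have hsub : s.image f ⊆ (s.image g).image u := by
      intro c hc
      obtain ⟨a, ha, rfl⟩ := Finset.mem_image.1 hc
      refine Finset.mem_image.2 ⟨g a, Finset.mem_image_of_mem _ ha, ?_⟩
      have hd : ∃ b, b ∈ s ∧ g b = g a := ⟨a, ha, rfl⟩
      rw [hu]
      simp only [dif_pos hd]
      exact h _ hd.choose_spec.1 _ ha hd.choose_spec.2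
    calc (s.image f).card ≤ ((s.image g).image u).card := Finset.card_le_card hsub
      _ ≤ (s.image g).card := Finset.card_image_le
end KER

variable {V β : Type} (ends : β → Sym2 V)

lemma sym2_exists (z : Sym2 V) : ∃ x y, z = s(x, y) :=
  Sym2.ind (fun x y => ⟨x, y, rfl⟩) z

lemma gstep_symm {F : Finset β} {u w : V} (h : GStep ends F u w) : GStep ends F w u := by
  obtain ⟨e, he, hends⟩ := h
  exact ⟨e, he, by rw [hends, Sym2.eq_swap]⟩

lemma greach_symm {F : Finset β} {u w : V} (h : GReach ends F u w) : GReach ends F w u :=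
  by
    induction h with
    | refl => exact Relation.ReflTransGen.refl
    | tail _ hs ih => exact Relation.ReflTransGen.head (gstep_symm ends hs) ih

lemma greach_trans {F : Finset β} {u w x : V} (h : GReach ends F u w)
    (h' : GReach ends F w x) : GReach ends F u x :=
  Relation.ReflTransGen.trans h h'

lemma greach_refl {F : Finset β} {u : V} : GReach ends F u u := Relation.ReflTransGen.refl

lemma greach_single {F : Finset β} {u w : V} {e : β} (he : e ∈ F) (h : ends e = s(u, w)) :
    GReach ends F u w :=
  Relation.ReflTransGen.single ⟨e, he, h⟩

lemma greach_mono {F F' : Finset β} (hFF : F ⊆ F') {u w : V} (h : GReach ends F u w) :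
    GReach ends F' u w := by
  induction h with
  | refl => exact greach_refl ends
  | tail _ hs ih =>
      obtain ⟨e, he, hends⟩ := hs
      exact Relation.ReflTransGen.tail ih ⟨e, hFF he, hends⟩

lemma mem_edgesIn {F : Finset β} {X : Finset V} {e : β} :
    e ∈ edgesIn ends F X ↔ e ∈ F ∧ ∀ v ∈ ends e, v ∈ X := Finset.mem_filter

lemma edgesIn_subset {F : Finset β} {X : Finset V} : edgesIn ends F X ⊆ F :=
  Finset.filter_subset _ _

lemma edgesIn_mono_left {F F' : Finset β} (h : F ⊆ F') {X : Finset V} :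
    edgesIn ends F X ⊆ edgesIn ends F' X := Finset.filter_subset_filter _ h

lemma greach_confine {F : Finset β} {X : Finset V}
    (hcl : ∀ a b : V, GStep ends F a b → a ∈ X → b ∈ X) {u w : V}
    (hu : u ∈ X) (h : GReach ends F u w) : GReach ends (edgesIn ends F X) u w := by
  induction h with
  | refl => exact greach_refl ends
  | tail hab hs ih =>
      rename_i b c
      have hbX : b ∈ X := by
        clear ih hs
        induction hab with
        | refl => exact hu
        | tail _ hs' ih' => exact hcl _ _ hs' ih'
      obtain ⟨e, he, hends⟩ := hs
      have hcX : c ∈ X := hcl _ _ ⟨e, he, hends⟩ hbX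
      refine Relation.ReflTransGen.tail ih ⟨e, ?_, hends⟩
      rw [mem_edgesIn]
      refine ⟨he, ?_⟩
      intro v hv
      rw [hends, Sym2.mem_iff] at hv
      rcases hv with rfl | rfl
      · exact hbX
      · exact hcX

lemma greach_class_eq {F : Finset β} {X : Finset V} {u w : V} (h : GReach ends F u w) :
    (X.filter fun x => GReach ends F u x) = (X.filter fun x => GReach ends F w x) := by
  ext x
  simp only [Finset.mem_filter, and_congr_right_iff]
  intro _
  constructor
  · intro hx; exact greach_trans ends (greach_symm ends h) hx
  · intro hx; exact greach_trans ends h hx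

lemma greach_insert_decompose {F : Finset β} {e : β} {p q : V} (hends : ends e = s(p, q))
    {x y : V} (h : GReach ends (insert e F) x y) :
    GReach ends F x y ∨ (GReach ends F x p ∧ GReach ends F q y) ∨
      (GReach ends F x q ∧ GReach ends F p y) := by
  induction h with
  | refl => exact Or.inl (greach_refl ends)
  | tail hab hs ih =>
      rename_i b c
      obtain ⟨e', he', hends'⟩ := hs
      rcases Finset.mem_insert.1 he' with rfl | heF
      · rw [hends] at hends'
        rcases Sym2.eq_iff.1 hends' with ⟨rfl, rfl⟩ | ⟨rfl, rfl⟩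
        · rcases ih with h1 | ⟨h1, h2⟩ | ⟨h1, h2⟩
          · exact Or.inr (Or.inl ⟨h1, greach_refl ends⟩)
          · exact Or.inr (Or.inl ⟨h1, greach_refl ends⟩)
          · exact Or.inl h1
        · rcases ih with h1 | ⟨h1, h2⟩ | ⟨h1, h2⟩
          · exact Or.inr (Or.inr ⟨h1, greach_refl ends⟩)
          · exact Or.inl h1
          · exact Or.inr (Or.inr ⟨h1, greach_refl ends⟩)
      · have hbc : GReach ends F b c := greach_single ends heF hends'
        rcases ih with h1 | ⟨h1, h2⟩ | ⟨h1, h2⟩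
        · exact Or.inl (greach_trans ends h1 hbc)
        · exact Or.inr (Or.inl ⟨h1, greach_trans ends h2 hbc⟩)
        · exact Or.inr (Or.inr ⟨h1, greach_trans ends h2 hbc⟩)

lemma greach_empty {u w : V} (h : GReach ends (∅ : Finset β) u w) : u = w := by
  induction h with
  | refl => rfl
  | tail _ hs _ => obtain ⟨e, he, _⟩ := hs; exact absurd he (Finset.notMem_empty e)

/-- Key counting lemma: `|X| ≤ |F| + #components`. -/
lemma card_le_card_add_comps (F : Finset β) (X : Finset V)
    (h : ∀ e ∈ F, ∀ v ∈ ends e, v ∈ X) :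
    X.card ≤ F.card + (X.image fun v => X.filter fun w => GReach ends F v w).card := by
  classical
  induction F using Finset.induction_on with
  | empty =>
      have himg : ∀ v ∈ X, (X.filter fun w => GReach ends (∅ : Finset β) v w) = {v} := by
        intro v hv
        ext w
        simp only [Finset.mem_filter, Finset.mem_singleton]
        constructor
        · rintro ⟨_, hr⟩; exact (greach_empty ends hr).symm
        · rintro rfl; exact ⟨hv, greach_refl ends⟩
      rw [Finset.card_empty, zero_add]
      have : (X.image fun v => X.filter fun w => GReach ends (∅ : Finset β) v w).card
          = X.card := by
        rw [Finset.card_image_of_injOn]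
        intro a ha b hb hab
        have : ({a} : Finset V) = {b} := by rw [← himg a ha, ← himg b hb]; exact hab
        simpa using this
      omega
  | insert e F hnot ih =>
      have hF : ∀ e' ∈ F, ∀ v ∈ ends e', v ∈ X := fun e' he' =>
        h e' (Finset.mem_insert_of_mem he')
      have ihX := ih hF
      obtain ⟨p, q, hpq⟩ := sym2_exists (ends e)
      have hp : p ∈ X := h e (Finset.mem_insert_self e F) p (by rw [hpq]; exact Sym2.mem_mk_left p q)
      have hq : q ∈ X := h e (Finset.mem_insert_self e F) q (by rw [hpq]; exact Sym2.mem_mk_right p q)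
      set cl : V → Finset V := fun v => X.filter fun w => GReach ends F v w with hcl
      set cl' : V → Finset V := fun v => X.filter fun w => GReach ends (insert e F) v w with hcl'
      suffices hsuff : (X.image cl).card ≤ (X.image cl').card + 1 by
        rw [Finset.card_insert_of_notMem hnot]
        omega
      set X₁ : Finset V := X.filter fun v => GReach ends F v p ∨ GReach ends F v q with hX1def
      set X₂ : Finset V := X.filter fun v => ¬(GReach ends F v p ∨ GReach ends F v q) with hX2def
      have hXsplit : X₁ ∪ X₂ = X := Finset.filter_union_filter_not_eq _ X
      have himg_split : X.image cl ⊆ X₁.image cl ∪ X₂.image cl := by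
        rw [← Finset.image_union, hXsplit]
      have hc1 : (X₁.image cl).card ≤ 2 := by
        have : X₁.image cl ⊆ {cl p, cl q} := by
          intro S hS
          obtain ⟨v, hv, rfl⟩ := Finset.mem_image.1 hS
          have hv' := (Finset.mem_filter.1 hv).2
          rcases hv' with hvp | hvq
          · exact Finset.mem_insert.2 (Or.inl (greach_class_eq ends hvp))
          · refine Finset.mem_insert.2 (Or.inr ?_)
            rw [Finset.mem_singleton]
            exact greach_class_eq ends hvq
        calc (X₁.image cl).card ≤ ({cl p, cl q} : Finset (Finset V)).card :=
              Finset.card_le_card this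
          _ ≤ 2 := Finset.card_insert_le _ _ |>.trans (by simp)
      have hker : ∀ v ∈ X₂, ∀ v' ∈ X₂, cl' v = cl' v' → cl v = cl v' := by
        intro v hv v' hv' hcleq
        have hvX : v' ∈ X := (Finset.mem_filter.1 hv').1
        have hv2 := (Finset.mem_filter.1 hv).2
        have : v' ∈ cl' v := by
          rw [hcleq, hcl']
          exact Finset.mem_filter.2 ⟨hvX, greach_refl ends⟩
        have hreach : GReach ends (insert e F) v v' := (Finset.mem_filter.1 this).2
        rcases greach_insert_decompose ends hpq hreach with h1 | ⟨h1, _⟩ | ⟨h1, _⟩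
        · exact greach_class_eq ends h1
        · exact absurd (Or.inl h1) hv2
        · exact absurd (Or.inr h1) hv2
      have hc2 : (X₂.image cl).card ≤ (X₂.image cl').card :=
        image_card_le_of_ker X₂ cl cl' hker
      have hX2e : X₂.image cl' ⊆ (X.image cl').erase (cl' p) := by
        intro S hS
        obtain ⟨v, hv, rfl⟩ := Finset.mem_image.1 hS
        have hvX : v ∈ X := (Finset.mem_filter.1 hv).1
        have hv2 := (Finset.mem_filter.1 hv).2
        refine Finset.mem_erase.2 ⟨?_, Finset.mem_image_of_mem _ hvX⟩
        intro heq
        have : p ∈ cl' v := by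
          rw [heq, hcl']
          exact Finset.mem_filter.2 ⟨hp, greach_refl ends⟩
        have hreach : GReach ends (insert e F) v p := (Finset.mem_filter.1 this).2
        rcases greach_insert_decompose ends hpq hreach with h1 | ⟨h1, _⟩ | ⟨h1, _⟩
        · exact hv2 (Or.inl h1)
        · exact hv2 (Or.inl h1)
        · exact hv2 (Or.inr h1)
      have hmemp : cl' p ∈ X.image cl' := Finset.mem_image_of_mem _ hp
      have hcard_erase : ((X.image cl').erase (cl' p)).card = (X.image cl').card - 1 :=
        Finset.card_erase_of_mem hmemp
      have hpos : 1 ≤ (X.image cl').card := Finset.card_pos.2 ⟨_, hmemp⟩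
      have h2' : (X₂.image cl').card ≤ (X.image cl').card - 1 :=
        hcard_erase ▸ Finset.card_le_card hX2e
      have := Finset.card_union_le (X₁.image cl) (X₂.image cl)
      have hfin := Finset.card_le_card himg_split
      omega

/-- Inner-connected vertex sets span many edges. -/
lemma conn_count {F : Finset β} {X : Finset V}
    (hF : ∀ e ∈ F, ∀ v ∈ ends e, v ∈ X)
    (hconn : ∀ x ∈ X, ∀ y ∈ X, GReach ends F x y) : X.card ≤ F.card + 1 := by
  have h := card_le_card_add_comps ends F X hF
  have himg : (X.image fun v => X.filter fun w => GReach ends F v w).card ≤ 1 := by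
    rw [Finset.card_le_one]
    intro a ha b hb
    obtain ⟨v, hv, rfl⟩ := Finset.mem_image.1 ha
    obtain ⟨v', hv', rfl⟩ := Finset.mem_image.1 hb
    exact greach_class_eq ends (hconn v hv v' hv')
  omega


variable [Fintype V]

lemma edgesIn_univ {F : Finset β} : edgesIn ends F (Finset.univ : Finset V) = F := by
  ext e; simp [mem_edgesIn]

lemma isForest_subset {F F' : Finset β} (h : F' ⊆ F) (hF : IsForest ends F) :
    IsForest ends F' := by
  intro X hX
  exact le_trans (Finset.card_le_card (edgesIn_mono_left ends h)) (hF X hX)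

/-- In a forest, removing an edge disconnects its two (distinct) endpoints. -/
lemma forest_erase_not_reach {F : Finset β} (hF : IsForest ends F) {e : β} (he : e ∈ F)
    {p q : V} (hpq : ends e = s(p, q)) (hne : p ≠ q) :
    ¬ GReach ends (F.erase e) p q := by
  intro hR
  set X : Finset V := Finset.univ.filter fun w => GReach ends (F.erase e) p w with hX
  have hpX : p ∈ X := Finset.mem_filter.2 ⟨Finset.mem_univ _, greach_refl ends⟩
  have hqX : q ∈ X := Finset.mem_filter.2 ⟨Finset.mem_univ _, hR⟩
  have hcl : ∀ a b : V, GStep ends (F.erase e) a b → a ∈ X → b ∈ X := by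
    intro a b hs ha
    refine Finset.mem_filter.2 ⟨Finset.mem_univ _, ?_⟩
    exact greach_trans ends (Finset.mem_filter.1 ha).2 (Relation.ReflTransGen.single hs)
  have hconn : ∀ x ∈ X, ∀ y ∈ X, GReach ends (edgesIn ends (F.erase e) X) x y := by
    intro x hx y hy
    have h1 := greach_confine ends hcl hpX (Finset.mem_filter.1 hx).2
    have h2 := greach_confine ends hcl hpX (Finset.mem_filter.1 hy).2
    exact greach_trans ends (greach_symm ends h1) h2
  have hcount := conn_count ends (fun e' he' => (mem_edgesIn ends |>.1 he').2) hconn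
  have hins : insert e (edgesIn ends (F.erase e) X) ⊆ edgesIn ends F X := by
    intro f hf
    rcases Finset.mem_insert.1 hf with rfl | hf'
    · refine (mem_edgesIn ends).2 ⟨he, ?_⟩
      intro v hv
      rw [hpq, Sym2.mem_iff] at hv
      rcases hv with rfl | rfl
      · exact hpX
      · exact hqX
    · exact edgesIn_mono_left ends (Finset.erase_subset e F) hf'
  have hnotmem : e ∉ edgesIn ends (F.erase e) X :=
    fun hmem => (Finset.mem_erase.1 (edgesIn_subset ends hmem)).1 rfl
  have hcard : (edgesIn ends (F.erase e) X).card + 1 ≤ (edgesIn ends F X).card := by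
    rw [← Finset.card_insert_of_notMem hnotmem]
    exact Finset.card_le_card hins
  have hXne : X.Nonempty := ⟨p, hpX⟩
  have := hF X hXne
  have hX1 : 1 ≤ X.card := Finset.card_pos.2 hXne
  omega

/-- Counting bound when `X` contains two vertices in different components. -/
lemma edgesIn_card_of_split {F : Finset β} (hF : IsForest ends F) {X : Finset V} {u v : V}
    (hu : u ∈ X) (hv : v ∈ X) (hnr : ¬ GReach ends F u v) :
    (edgesIn ends F X).card + 2 ≤ X.card := by
  set X₁ : Finset V := X.filter fun w => GReach ends F u w with hX1
  set X₂ : Finset V := X.filter fun w => ¬ GReach ends F u w with hX2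
  have hu1 : u ∈ X₁ := Finset.mem_filter.2 ⟨hu, greach_refl ends⟩
  have hv2 : v ∈ X₂ := Finset.mem_filter.2 ⟨hv, hnr⟩
  have hsub : edgesIn ends F X ⊆ edgesIn ends F X₁ ∪ edgesIn ends F X₂ := by
    intro f hf
    obtain ⟨hfF, hfX⟩ := (mem_edgesIn ends).1 hf
    obtain ⟨a, b, hab⟩ := sym2_exists (ends f)
    have haX : a ∈ X := hfX a (by rw [hab]; exact Sym2.mem_mk_left a b)
    have hbX : b ∈ X := hfX b (by rw [hab]; exact Sym2.mem_mk_right a b)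
    have hstep : GReach ends F a b := greach_single ends hfF hab
    by_cases hua : GReach ends F u a
    · refine Finset.mem_union_left _ ((mem_edgesIn ends).2 ⟨hfF, ?_⟩)
      intro w hw
      rw [hab, Sym2.mem_iff] at hw
      rcases hw with rfl | rfl
      · exact Finset.mem_filter.2 ⟨haX, hua⟩
      · exact Finset.mem_filter.2 ⟨hbX, greach_trans ends hua hstep⟩
    · refine Finset.mem_union_right _ ((mem_edgesIn ends).2 ⟨hfF, ?_⟩)
      intro w hw
      rw [hab, Sym2.mem_iff] at hw
      rcases hw with rfl | rfl
      · exact Finset.mem_filter.2 ⟨haX, hua⟩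
      · refine Finset.mem_filter.2 ⟨hbX, fun hub => hua ?_⟩
        exact greach_trans ends hub (greach_symm ends hstep)
  have hcards : X₁.card + X₂.card = X.card := Finset.card_filter_add_card_filter_not _
  have h1 := hF X₁ ⟨u, hu1⟩
  have h2 := hF X₂ ⟨v, hv2⟩
  have h11 : 1 ≤ X₁.card := Finset.card_pos.2 ⟨u, hu1⟩
  have h21 : 1 ≤ X₂.card := Finset.card_pos.2 ⟨v, hv2⟩
  have := Finset.card_union_le (edgesIn ends F X₁) (edgesIn ends F X₂)
  have := Finset.card_le_card hsub
  omega

lemma forest_card_le [Nonempty V] {F : Finset β} (hF : IsForest ends F) :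
    F.card + 1 ≤ Fintype.card V := by
  have := hF Finset.univ Finset.univ_nonempty
  rw [edgesIn_univ] at this
  have h1 : 1 ≤ (Finset.univ : Finset V).card := Finset.card_pos.2 Finset.univ_nonempty
  rw [Finset.card_univ] at this h1
  omega

lemma forest_card_le_of_disconnected {F : Finset β} (hF : IsForest ends F)
    {u v : V} (hnr : ¬ GReach ends F u v) : F.card + 2 ≤ Fintype.card V := by
  have := edgesIn_card_of_split ends hF (Finset.mem_univ u) (Finset.mem_univ v) hnr
  rw [edgesIn_univ, Finset.card_univ] at this
  exact this

/-- Adding an edge between different components keeps a forest. -/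
lemma isForest_insert {F : Finset β} (hF : IsForest ends F) {e : β} {p q : V}
    (hpq : ends e = s(p, q)) (hne : p ≠ q) (hnr : ¬ GReach ends F p q) :
    IsForest ends (insert e F) := by
  have heF : e ∉ F := fun he => hnr (greach_single ends he hpq)
  intro X hX
  by_cases hmem : p ∈ X ∧ q ∈ X
  · have hedge : edgesIn ends (insert e F) X = insert e (edgesIn ends F X) := by
      ext f
      simp only [mem_edgesIn, Finset.mem_insert]
      constructor
      · rintro ⟨rfl | hfF, hin⟩
        · exact Or.inl rfl
        · exact Or.inr ⟨hfF, hin⟩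
      · rintro (rfl | ⟨hfF, hin⟩)
        · refine ⟨Or.inl rfl, ?_⟩
          intro v hv
          rw [hpq, Sym2.mem_iff] at hv
          rcases hv with rfl | rfl
          · exact hmem.1
          · exact hmem.2
        · exact ⟨Or.inr hfF, hin⟩
    have hnotm : e ∉ edgesIn ends F X := fun hmem' => heF (edgesIn_subset ends hmem')
    rw [hedge, Finset.card_insert_of_notMem hnotm]
    have := edgesIn_card_of_split ends hF hmem.1 hmem.2 hnr
    omega
  · have hedge : edgesIn ends (insert e F) X = edgesIn ends F X := by
      ext f
      simp only [mem_edgesIn, Finset.mem_insert]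
      constructor
      · rintro ⟨rfl | hfF, hin⟩
        · exfalso
          apply hmem
          constructor
          · exact hin p (by rw [hpq]; exact Sym2.mem_mk_left p q)
          · exact hin q (by rw [hpq]; exact Sym2.mem_mk_right p q)
        · exact ⟨hfF, hin⟩
      · rintro ⟨hfF, hin⟩; exact ⟨Or.inr hfF, hin⟩
    rw [hedge]
    exact hF X hX

/-- Minimal connectors in a forest consist of essential edges. -/
lemma exists_min_connector {F : Finset β} (hF : IsForest ends F)
    (hl : ∀ f ∈ F, ¬ (ends f).IsDiag) {x y : V} (h : GReach ends F x y) :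
    ∃ F₀, F₀ ⊆ F ∧ GReach ends F₀ x y ∧ ∀ f ∈ F₀, ¬ GReach ends (F.erase f) x y := by
  classical
  set S : Finset (Finset β) := F.powerset.filter fun F' => GReach ends F' x y with hS
  have hSne : S.Nonempty := ⟨F, Finset.mem_filter.2 ⟨Finset.mem_powerset_self F, h⟩⟩
  obtain ⟨F₀, hF₀S, hmin⟩ := Finset.exists_min_image S Finset.card hSne
  obtain ⟨hF₀p, hR₀⟩ := Finset.mem_filter.1 hF₀S
  have hF₀F : F₀ ⊆ F := Finset.mem_powerset.1 hF₀p
  refine ⟨F₀, hF₀F, hR₀, ?_⟩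
  intro f hf
  have hmin' : ¬ GReach ends (F₀.erase f) x y := by
    intro hR'
    have hmem : F₀.erase f ∈ S := Finset.mem_filter.2
      ⟨Finset.mem_powerset.2 ((Finset.erase_subset f F₀).trans hF₀F), hR'⟩
    have := hmin _ hmem
    have := Finset.card_erase_of_mem hf
    have : (F₀.erase f).card < F₀.card := by
      rw [Finset.card_erase_of_mem hf]
      exact Nat.sub_lt (Finset.card_pos.2 ⟨f, hf⟩) one_pos
    omega
  intro hR
  obtain ⟨a, b, hab⟩ := sym2_exists (ends f)
  have hne : a ≠ b := by
    intro heq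
    exact hl f (hF₀F hf) (by rw [hab, heq]; exact Sym2.isDiag_iff_proj_eq.2 rfl)
  have hdec := greach_insert_decompose ends hab (by
    rw [Finset.insert_erase hf]; exact hR₀ : GReach ends (insert f (F₀.erase f)) x y)
  have hsub : F₀.erase f ⊆ F.erase f := Finset.erase_subset_erase f hF₀F
  have hcyc := forest_erase_not_reach ends hF (hF₀F hf) hab hne
  rcases hdec with h1 | ⟨h1, h2⟩ | ⟨h1, h2⟩
  · exact hmin' h1
  · -- x ~ a, b ~ y in F₀.erase f; plus x ~ y in F.erase f gives a ~ b
    apply hcyc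
    have ha : GReach ends (F.erase f) a x := greach_symm ends (greach_mono ends hsub h1)
    have hb : GReach ends (F.erase f) y b := greach_symm ends (greach_mono ends hsub h2)
    exact greach_trans ends ha (greach_trans ends hR hb)
  · apply hcyc
    have ha : GReach ends (F.erase f) a y := greach_mono ends hsub h2
    have hb : GReach ends (F.erase f) y x := greach_symm ends hR
    have hc : GReach ends (F.erase f) x b := greach_mono ends hsub h1
    exact greach_trans ends ha (greach_trans ends hb hc)


section PART
variable [Fintype β] {P : Finset (Finset V)}

lemma mem_crossEdges {e : β} :
    e ∈ crossEdges ends P ↔ ¬ ∃ X ∈ P, ∀ v ∈ ends e, v ∈ X := by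
  unfold crossEdges
  simp

lemma vpartition_sum_card (hP : IsVPartition P) :
    ∑ C ∈ P, C.card = Fintype.card V := by
  rw [← Finset.card_univ, ← hP.2.2, Finset.card_biUnion]
  · rfl
  · intro x hx y hy hxy
    exact hP.2.1 x hx y hy hxy

lemma cross_inner_bound (hP : IsVPartition P) (G : Finset β) :
    (∑ C ∈ P, (edgesIn ends G C).card) + (G ∩ crossEdges ends P).card ≤ G.card := by
  have hdisjC : ∀ x ∈ P, ∀ y ∈ P, x ≠ y → Disjoint (edgesIn ends G x) (edgesIn ends G y) := by
    intro C hC C' hC' hne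
    rw [Finset.disjoint_left]
    intro e he he'
    obtain ⟨a, b, hab⟩ := sym2_exists (ends e)
    have ha : a ∈ C := (mem_edgesIn ends |>.1 he).2 a (by rw [hab]; exact Sym2.mem_mk_left a b)
    have ha' : a ∈ C' := (mem_edgesIn ends |>.1 he').2 a (by rw [hab]; exact Sym2.mem_mk_left a b)
    exact Finset.disjoint_left.1 (hP.2.1 C hC C' hC' hne) ha ha'
  have hbU : (P.biUnion fun C => edgesIn ends G C).card = ∑ C ∈ P, (edgesIn ends G C).card :=
    Finset.card_biUnion hdisjC
  have hdisj2 : Disjoint (P.biUnion fun C => edgesIn ends G C) (G ∩ crossEdges ends P) := by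
    rw [Finset.disjoint_left]
    intro e he he'
    obtain ⟨C, hC, heC⟩ := Finset.mem_biUnion.1 he
    have hcross := (mem_crossEdges ends).1 (Finset.mem_inter.1 he').2
    exact hcross ⟨C, hC, (mem_edgesIn ends |>.1 heC).2⟩
  have hsub : (P.biUnion fun C => edgesIn ends G C) ∪ (G ∩ crossEdges ends P) ⊆ G := by
    intro e he
    rcases Finset.mem_union.1 he with he | he
    · obtain ⟨C, _, heC⟩ := Finset.mem_biUnion.1 he
      exact edgesIn_subset ends heC
    · exact (Finset.mem_inter.1 he).1
  have := Finset.card_le_card hsub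
  rw [Finset.card_union_of_disjoint hdisj2, hbU] at this
  exact this

lemma cross_inner_cover (G : Finset β) :
    G.card ≤ (∑ C ∈ P, (edgesIn ends G C).card) + (G ∩ crossEdges ends P).card := by
  have hsub : G ⊆ (P.biUnion fun C => edgesIn ends G C) ∪ (G ∩ crossEdges ends P) := by
    intro e he
    by_cases hc : e ∈ crossEdges ends P
    · exact Finset.mem_union_right _ (Finset.mem_inter.2 ⟨he, hc⟩)
    · have hne : ∃ X ∈ P, ∀ v ∈ ends e, v ∈ X := by
        by_contra hcon
        exact hc ((mem_crossEdges ends).2 hcon)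
      obtain ⟨C, hC, hin⟩ := hne
      exact Finset.mem_union_left _ (Finset.mem_biUnion.2 ⟨C, hC, (mem_edgesIn ends).2 ⟨he, hin⟩⟩)
  calc G.card ≤ ((P.biUnion fun C => edgesIn ends G C) ∪ (G ∩ crossEdges ends P)).card :=
        Finset.card_le_card hsub
    _ ≤ (P.biUnion fun C => edgesIn ends G C).card + (G ∩ crossEdges ends P).card :=
        Finset.card_union_le _ _
    _ ≤ (∑ C ∈ P, (edgesIn ends G C).card) + (G ∩ crossEdges ends P).card := by
        have := Finset.card_biUnion_le (s := P) (t := fun C => edgesIn ends G C)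
        omega

lemma tree_cross_bound (hP : IsVPartition P) {T : Finset β} (hT : IsSpanningTree ends T) :
    P.card ≤ (T ∩ crossEdges ends P).card + 1 := by
  have hB : Fintype.card V ≤ T.card + 1 := by
    have := conn_count ends (F := T) (X := Finset.univ)
      (fun e _ v _ => Finset.mem_univ v) (fun x _ y _ => hT.2 x y)
    rw [Finset.card_univ] at this
    exact this
  have hA : (∑ C ∈ P, (edgesIn ends T C).card) + P.card ≤ Fintype.card V := by
    rw [← vpartition_sum_card hP]
    have : ∑ C ∈ P, ((edgesIn ends T C).card + 1) ≤ ∑ C ∈ P, C.card := by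
      refine Finset.sum_le_sum ?_
      intro C hC
      have h1 := hT.1 C (hP.1 C hC)
      have h2 : 1 ≤ C.card := Finset.card_pos.2 (hP.1 C hC)
      omega
    rw [Finset.sum_add_distrib] at this
    simpa using this
  have hC := cross_inner_cover ends (P := P) T
  omega

end PART


section MAX
variable [Fintype β] {k : ℕ}

def Adm (F : Fin k → Finset β) : Prop :=
  (∀ i j, i ≠ j → Disjoint (F i) (F j)) ∧ ∀ i, IsForest ends (F i)

def total (F : Fin k → Finset β) : ℕ := ∑ i, (F i).card

def MaxAdm (F : Fin k → Finset β) : Prop :=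
  Adm ends F ∧ ∀ G : Fin k → Finset β, Adm ends G → total G ≤ total F

def Arc (F : Finset β) (gp gc : β) : Prop :=
  gc ∈ F ∧ ∃ x y, ends gp = s(x, y) ∧ GReach ends F x y ∧
    ¬ GReach ends (F.erase gc) x y

def ChainOK (Fam : Fin k → Finset β) (m : ℕ) (g : ℕ → β) (j : ℕ → Fin k) : Prop :=
  (∀ i, g 0 ∉ Fam i) ∧ ∀ l, 1 ≤ l → l ≤ m → Arc ends (Fam (j l)) (g (l - 1)) (g l)

def DefS (k : ℕ) (m : ℕ) : Prop :=
  ∃ Fam : Fin k → Finset β, ∃ g : ℕ → β, ∃ j : ℕ → Fin k, ∃ i : Fin k, ∃ x y : V,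
    MaxAdm ends Fam ∧ ChainOK ends Fam m g j ∧ ends (g m) = s(x, y) ∧
      ¬ GReach ends (Fam i) x y

lemma exists_maxAdm (k : ℕ) : ∃ F : Fin k → Finset β, MaxAdm ends F := by
  classical
  set A : Finset (Fin k → Finset β) := Finset.univ.filter (Adm ends) with hA
  have hne : A.Nonempty := by
    refine ⟨fun _ => ∅, Finset.mem_filter.2 ⟨Finset.mem_univ _, ?_, ?_⟩⟩
    · intro i j _; simp
    · intro i X hX
      have : edgesIn ends (∅ : Finset β) X = ∅ := by
        ext e; simp [mem_edgesIn]
      rw [this]; simp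
  obtain ⟨F, hF, hmax⟩ := Finset.exists_max_image A total hne
  exact ⟨F, (Finset.mem_filter.1 hF).2,
    fun G hG => hmax G (Finset.mem_filter.2 ⟨Finset.mem_univ _, hG⟩)⟩

lemma no_defect (hl : ∀ e : β, ¬ (ends e).IsDiag) : ¬ ∃ m : ℕ, DefS ends k m := by
  intro hex
  obtain ⟨Fam, g, j, i, x, y, hmax, hchain, hends, hnr⟩ := Nat.find_spec hex
  set m₀ := Nat.find hex with hm₀
  have hxyne : x ≠ y := by
    intro heq
    exact hl (g m₀) (by rw [hends, heq]; exact Sym2.isDiag_iff_proj_eq.2 rfl)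
  rcases Nat.eq_zero_or_pos m₀ with hz | hpos
  · -- base case : the free edge g 0 can be added to Fam i
    have hfree : ∀ i', g m₀ ∉ Fam i' := by rw [hz]; exact hchain.1
    set F' : Fin k → Finset β :=
      fun l => if l = i then insert (g m₀) (Fam i) else Fam l with hF'
    have hFa : ∀ l, F' l = if l = i then insert (g m₀) (Fam i) else Fam l := fun l => rfl
    have hadm : Adm ends F' := by
      constructor
      · intro a b hab
        rw [hFa a, hFa b]
        by_cases ha : a = i <;> by_cases hb : b = i
        · exact absurd (ha.trans hb.symm) hab
        · rw [if_pos ha, if_neg hb]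
          exact Finset.disjoint_insert_left.2 ⟨hfree b, hmax.1.1 i b (Ne.symm hb)⟩
        · rw [if_neg ha, if_pos hb]
          exact (Finset.disjoint_insert_left.2 ⟨hfree a, hmax.1.1 i a (Ne.symm ha)⟩).symm
        · rw [if_neg ha, if_neg hb]
          exact hmax.1.1 a b hab
      · intro a
        rw [hFa a]
        by_cases ha : a = i
        · rw [if_pos ha]
          exact isForest_insert ends (hmax.1.2 i) hends hxyne hnr
        · rw [if_neg ha]
          exact hmax.1.2 a
    have htot : total F' = total Fam + 1 := by
      unfold total
      have e1 : ∑ l, (F' l).card = (F' i).card + ∑ l ∈ Finset.univ.erase i, (F' l).card :=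
        (Finset.add_sum_erase _ _ (Finset.mem_univ i)).symm
      have e2 : ∑ l, (Fam l).card = (Fam i).card + ∑ l ∈ Finset.univ.erase i, (Fam l).card :=
        (Finset.add_sum_erase _ _ (Finset.mem_univ i)).symm
      have e3 : ∑ l ∈ Finset.univ.erase i, (F' l).card
          = ∑ l ∈ Finset.univ.erase i, (Fam l).card := by
        refine Finset.sum_congr rfl ?_
        intro l hlmem
        rw [hFa l, if_neg (Finset.mem_erase.1 hlmem).1]
      have c1 : (F' i).card = (Fam i).card + 1 := by
        rw [hFa i, if_pos rfl, Finset.card_insert_of_notMem (hfree i)]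
      omega
    have := hmax.2 F' hadm
    omega
  · -- inductive case
    have hm1 : 1 ≤ m₀ := hpos
    obtain ⟨hgm, x', y', hxy', hR', hNR'⟩ := hchain.2 m₀ hm1 le_rfl
    set jm := j m₀ with hjm
    have hij : i ≠ jm := by
      intro heq
      exact hnr (greach_single ends (heq ▸ hgm) hends)
    have hgmi : g m₀ ∉ Fam i := Finset.disjoint_left.1 (hmax.1.1 jm i (Ne.symm hij)) hgm
    set F' : Fin k → Finset β :=
      fun l => if l = i then insert (g m₀) (Fam i)
        else if l = jm then (Fam jm).erase (g m₀) else Fam l with hF'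
    have hFa : ∀ l, F' l = if l = i then insert (g m₀) (Fam i)
        else if l = jm then (Fam jm).erase (g m₀) else Fam l := fun l => rfl
    have hF'i : F' i = insert (g m₀) (Fam i) := by rw [hFa i, if_pos rfl]
    have hF'jm : F' jm = (Fam jm).erase (g m₀) := by
      rw [hFa jm, if_neg (Ne.symm hij), if_pos rfl]
    have hF'o : ∀ l, l ≠ i → l ≠ jm → F' l = Fam l := by
      intro l h1 h2; rw [hFa l, if_neg h1, if_neg h2]
    have hnotg : ∀ l, l ≠ i → g m₀ ∉ F' l ∧ F' l ⊆ Fam l := by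
      intro l h1
      by_cases h2 : l = jm
      · rw [h2, hF'jm]
        exact ⟨Finset.notMem_erase _ _, Finset.erase_subset _ _⟩
      · rw [hF'o l h1 h2]
        exact ⟨Finset.disjoint_left.1 (hmax.1.1 jm l (Ne.symm h2)) hgm, le_refl _⟩
    have hadm : Adm ends F' := by
      constructor
      · intro a b hab
        by_cases ha : a = i <;> by_cases hb : b = i
        · exact absurd (ha.trans hb.symm) hab
        · rw [ha, hF'i]
          refine Finset.disjoint_insert_left.2 ⟨(hnotg b hb).1, ?_⟩
          exact Finset.disjoint_of_subset_right (hnotg b hb).2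
            (hmax.1.1 i b (Ne.symm hb))
        · rw [hb, hF'i]
          refine (Finset.disjoint_insert_left.2 ⟨(hnotg a ha).1, ?_⟩).symm
          exact Finset.disjoint_of_subset_right (hnotg a ha).2
            (hmax.1.1 i a (Ne.symm ha))
        · exact Finset.disjoint_of_subset_left (hnotg a ha).2
            (Finset.disjoint_of_subset_right (hnotg b hb).2 (hmax.1.1 a b hab))
      · intro a
        by_cases ha : a = i
        · rw [ha, hF'i]
          exact isForest_insert ends (hmax.1.2 i) hends hxyne hnr
        · exact isForest_subset ends (hnotg a ha).2 (hmax.1.2 a)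
    have htot : total F' = total Fam := by
      unfold total
      have hjmne : jm ∈ Finset.univ.erase i :=
        Finset.mem_erase.2 ⟨Ne.symm hij, Finset.mem_univ _⟩
      have e1 := (Finset.add_sum_erase Finset.univ (fun l => (F' l).card)
        (Finset.mem_univ i)).symm
      have e1b := (Finset.add_sum_erase (Finset.univ.erase i) (fun l => (F' l).card) hjmne).symm
      have e2 := (Finset.add_sum_erase Finset.univ (fun l => (Fam l).card)
        (Finset.mem_univ i)).symm
      have e2b := (Finset.add_sum_erase (Finset.univ.erase i) (fun l => (Fam l).card) hjmne).symm
      have e3 : ∑ l ∈ (Finset.univ.erase i).erase jm, (F' l).card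
          = ∑ l ∈ (Finset.univ.erase i).erase jm, (Fam l).card := by
        refine Finset.sum_congr rfl ?_
        intro l hlmem
        have h2 := (Finset.mem_erase.1 hlmem).1
        have h1 := (Finset.mem_erase.1 (Finset.mem_erase.1 hlmem).2).1
        rw [hF'o l h1 h2]
      have c1 : (F' i).card = (Fam i).card + 1 := by
        rw [hF'i, Finset.card_insert_of_notMem hgmi]
      have c2 : (F' jm).card + 1 = (Fam jm).card := by
        rw [hF'jm, Finset.card_erase_of_mem hgm]
        have : 1 ≤ (Fam jm).card := Finset.card_pos.2 ⟨g m₀, hgm⟩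
        omega
      omega
    have hmax' : MaxAdm ends F' := ⟨hadm, fun G hG => (hmax.2 G hG).trans_eq htot.symm⟩
    have hfree' : ∀ l, g 0 ∉ F' l := by
      intro l
      have h0 : g 0 ∉ Fam l := hchain.1 l
      by_cases hli : l = i
      · rw [hli, hF'i, Finset.mem_insert]
        rintro (h | h)
        · exact hchain.1 jm (h ▸ hgm)
        · exact hchain.1 i h
      · exact fun hmem => h0 ((hnotg l hli).2 hmem)
    by_cases hfail : ∃ l, 1 ≤ l ∧ l ≤ m₀ - 1 ∧ ¬ Arc ends (F' (j l)) (g (l - 1)) (g l)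
    · -- some arc of the shortened chain fails
      set l₀ := Nat.find hfail with hl₀
      obtain ⟨hl1, hl2, hnArc⟩ := Nat.find_spec hfail
      obtain ⟨hmemO, xo, yo, hxyo, hRO, hNRO⟩ := hchain.2 l₀ hl1 (by omega)
      have hchain_pre : ∀ m' ≤ m₀, ChainOK ends Fam m' g j :=
        fun m' hm' => ⟨hchain.1, fun l h1 h2 => hchain.2 l h1 (h2.trans hm')⟩
      have hne_lm : g l₀ ≠ g m₀ := by
        intro heq
        refine Nat.find_min hex (show l₀ < m₀ by omega)
          ⟨Fam, g, j, i, x, y, hmax, hchain_pre l₀ (by omega), ?_, hnr⟩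
        rw [heq]; exact hends
      have hmem' : g l₀ ∈ F' (j l₀) := by
        by_cases hji : j l₀ = i
        · rw [hji, hF'i]
          exact Finset.mem_insert_of_mem (hji ▸ hmemO)
        · by_cases hjj : j l₀ = jm
          · rw [hjj, hF'jm]
            exact Finset.mem_erase.2 ⟨hne_lm, hjj ▸ hmemO⟩
          · rw [hF'o _ hji hjj]
            exact hmemO
      by_cases hRch : GReach ends (F' (j l₀)) xo yo
      · -- essentiality must fail, leading to a contradiction with the defect
        have hRchE : GReach ends ((F' (j l₀)).erase (g l₀)) xo yo := by
          by_contra hcon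
          exact hnArc ⟨hmem', xo, yo, hxyo, hRch, hcon⟩
        by_cases hji : j l₀ = i
        · rw [hji] at hRchE hNRO hRO
          rw [hF'i, Finset.erase_insert_of_ne (Ne.symm hne_lm)] at hRchE
          rcases greach_insert_decompose ends hends hRchE with h1 | ⟨h1, h2⟩ | ⟨h1, h2⟩
          · exact hNRO h1
          · apply hnr
            have e1 : GReach ends (Fam i) x xo :=
              greach_symm ends (greach_mono ends (Finset.erase_subset _ _) h1)
            have e2 : GReach ends (Fam i) yo y :=
              greach_symm ends (greach_mono ends (Finset.erase_subset _ _) h2)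
            exact greach_trans ends e1 (greach_trans ends hRO e2)
          · apply hnr
            have e1 : GReach ends (Fam i) x yo :=
              greach_mono ends (Finset.erase_subset _ _) h2
            have e2 : GReach ends (Fam i) yo xo := greach_symm ends hRO
            have e3 : GReach ends (Fam i) xo y :=
              greach_mono ends (Finset.erase_subset _ _) h1
            exact greach_trans ends e1 (greach_trans ends e2 e3)
        · apply hNRO
          have hss : (F' (j l₀)).erase (g l₀) ⊆ (Fam (j l₀)).erase (g l₀) :=
            Finset.erase_subset_erase _ (hnotg _ hji).2
          exact greach_mono ends hss hRchE
      · -- reach fails : shorter defect chain for F'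
        have hcOK : ChainOK ends F' (l₀ - 1) g j := by
          refine ⟨hfree', ?_⟩
          intro l h1 h2
          by_contra hcon
          exact Nat.find_min hfail (show l < l₀ by omega) ⟨h1, by omega, hcon⟩
        have hgeq : g ((l₀ : ℕ) - 1) = g (l₀ - 1) := rfl
        exact Nat.find_min hex (show l₀ - 1 < m₀ by omega)
          ⟨F', g, j, j l₀, xo, yo, hmax', hcOK, hxyo, hRch⟩
    · -- no arc fails : the whole shortened chain is a defect chain for F'
      have hcOK : ChainOK ends F' (m₀ - 1) g j := by
        refine ⟨hfree', ?_⟩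
        intro l h1 h2
        by_contra hcon
        exact hfail ⟨l, h1, h2, hcon⟩
      refine Nat.find_min hex (show m₀ - 1 < m₀ by omega)
        ⟨F', g, j, jm, x', y', hmax', hcOK, hxy', ?_⟩
      rw [hF'jm]
      exact hNR'

end MAX


section FINAL
variable [Fintype β] [Nonempty V] {k : ℕ}

lemma maxAdm_conn (hl : ∀ e : β, ¬ (ends e).IsDiag) (hk : 1 ≤ k)
    (hcond : ∀ P : Finset (Finset V), IsVPartition P → 1 < P.card →
      k * (P.card - 1) ≤ (crossEdges ends P).card)
    (F : Fin k → Finset β) (hmax : MaxAdm ends F) :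
    ∀ i u w, GReach ends (F i) u w := by
  classical
  by_contra hcon
  push_neg at hcon
  obtain ⟨i₀, u, w, hnr⟩ := hcon
  -- the closure `D` of the free edges under taking essential edges
  set D : Finset β := Finset.univ.filter
    (fun e => ∃ m gs js, ChainOK ends F m gs js ∧ gs m = e) with hD
  have hmemD : ∀ e : β, (∃ m gs js, ChainOK ends F m gs js ∧ gs m = e) → e ∈ D :=
    fun e he => Finset.mem_filter.2 ⟨Finset.mem_univ _, he⟩
  have hsat : ∀ e ∈ D, ∀ i : Fin k, ∀ x y, ends e = s(x, y) → GReach ends (F i) x y := by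
    intro e he i x y hxy
    by_contra hcon'
    obtain ⟨m, gs, js, hchain, hgs⟩ := (Finset.mem_filter.1 he).2
    exact no_defect ends hl ⟨m, F, gs, js, i, x, y, hmax, hchain,
      by rw [hgs]; exact hxy, hcon'⟩
  have hfreeD : ∀ e : β, (∀ i, e ∉ F i) → e ∈ D := by
    intro e hfree
    exact hmemD e ⟨0, fun _ => e, fun _ => i₀, ⟨hfree, fun l h1 h2 => by omega⟩, rfl⟩
  have hclosure : ∀ e ∈ D, ∀ i : Fin k, ∀ x y, ends e = s(x, y) →
      ∃ F₀, F₀ ⊆ F i ∧ F₀ ⊆ D ∧ GReach ends F₀ x y := by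
    intro e he i x y hxy
    have hR := hsat e he i x y hxy
    obtain ⟨F₀, hsub, hR0, hess⟩ :=
      exists_min_connector ends (hmax.1.2 i) (fun f _ => hl f) hR
    refine ⟨F₀, hsub, ?_, hR0⟩
    intro f hf
    obtain ⟨m, gs, js, hchain, hgs⟩ := (Finset.mem_filter.1 he).2
    refine hmemD f ⟨m + 1, fun l => if l ≤ m then gs l else f,
      fun l => if l ≤ m then js l else i, ⟨?_, ?_⟩, ?_⟩
    · intro i'
      show (if 0 ≤ m then gs 0 else f) ∉ F i'
      rw [if_pos (Nat.zero_le m)]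
      exact hchain.1 i'
    · intro l h1 h2
      show Arc ends (F (if l ≤ m then js l else i))
        (if l - 1 ≤ m then gs (l - 1) else f) (if l ≤ m then gs l else f)
      by_cases hlm : l ≤ m
      · rw [if_pos hlm, if_pos hlm, if_pos (by omega : l - 1 ≤ m)]
        exact hchain.2 l h1 hlm
      · have hl' : l = m + 1 := by omega
        rw [if_neg hlm, if_neg hlm, if_pos (by omega : l - 1 ≤ m)]
        have hlme : l - 1 = m := by omega
        rw [hlme, hgs]
        exact ⟨hsub hf, x, y, hxy, hR, hess f hf⟩
    · show (if m + 1 ≤ m then gs (m + 1) else f) = f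
      rw [if_neg (by omega : ¬ m + 1 ≤ m)]
  -- the partition into components of `D`
  set cls : V → Finset V := fun v => Finset.univ.filter (fun z => GReach ends D v z) with hcls
  have hclsmem : ∀ v, v ∈ cls v := fun v =>
    Finset.mem_filter.2 ⟨Finset.mem_univ _, greach_refl ends⟩
  have hclseq : ∀ v z, GReach ends D v z → cls v = cls z := by
    intro v z hvz
    rw [hcls]
    exact greach_class_eq ends hvz
  set P : Finset (Finset V) := Finset.univ.image cls with hP
  have hPpart : IsVPartition P := by
    refine ⟨?_, ?_, ?_⟩
    · intro C hC
      obtain ⟨v, _, rfl⟩ := Finset.mem_image.1 hC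
      exact ⟨v, hclsmem v⟩
    · intro C hC C' hC' hne
      obtain ⟨v, _, rfl⟩ := Finset.mem_image.1 hC
      obtain ⟨v', _, rfl⟩ := Finset.mem_image.1 hC'
      rw [Finset.disjoint_left]
      intro z hz hz'
      have h1 : GReach ends D v z := (Finset.mem_filter.1 hz).2
      have h2 : GReach ends D v' z := (Finset.mem_filter.1 hz').2
      exact hne (hclseq v z h1 ▸ (hclseq v' z h2).symm ▸ rfl)
    · refine Finset.eq_univ_of_forall ?_
      intro z
      exact Finset.mem_biUnion.2 ⟨cls z, Finset.mem_image_of_mem _ (Finset.mem_univ z),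
        hclsmem z⟩
  -- inner connectivity of the classes
  have hinner : ∀ i : Fin k, ∀ v z, GReach ends D v z →
      GReach ends (edgesIn ends (F i) (cls v)) v z := by
    intro i v z hvz
    induction hvz with
    | refl => exact greach_refl ends
    | tail hab hs ih =>
        rename_i b c
        obtain ⟨d, hdD, hdends⟩ := hs
        obtain ⟨F₀, hsub, hsubD, hR0⟩ := hclosure d hdD i b c hdends
        have hvb : GReach ends D v b := hab
        have hclosed : ∀ a a' : V, GStep ends F₀ a a' → a ∈ cls v → a' ∈ cls v := by
          intro a a' hst ha
          obtain ⟨f, hfF0, hfe⟩ := hst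
          refine Finset.mem_filter.2 ⟨Finset.mem_univ _, ?_⟩
          exact Relation.ReflTransGen.tail (Finset.mem_filter.1 ha).2 ⟨f, hsubD hfF0, hfe⟩
        have hbv : b ∈ cls v := Finset.mem_filter.2 ⟨Finset.mem_univ _, hvb⟩
        have hconf := greach_confine ends hclosed hbv hR0
        have hmono : edgesIn ends F₀ (cls v) ⊆ edgesIn ends (F i) (cls v) :=
          edgesIn_mono_left ends hsub
        exact greach_trans ends ih (greach_mono ends hmono hconf)
  have hinner2 : ∀ C ∈ P, ∀ i : Fin k, ∀ a ∈ C, ∀ b ∈ C,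
      GReach ends (edgesIn ends (F i) C) a b := by
    intro C hC i a ha b hb
    obtain ⟨v, _, rfl⟩ := Finset.mem_image.1 hC
    have h1 := hinner i v a (Finset.mem_filter.1 ha).2
    have h2 := hinner i v b (Finset.mem_filter.1 hb).2
    exact greach_trans ends (greach_symm ends h1) h2
  -- the partition is nontrivial
  have hPc : 1 < P.card := by
    have hne : cls u ≠ cls w := by
      intro heq
      have hw : w ∈ cls u := heq ▸ hclsmem w
      have := hinner i₀ u w (Finset.mem_filter.1 hw).2
      exact hnr (greach_mono ends (edgesIn_subset ends) this)
    exact Finset.one_lt_card.2 ⟨cls u, Finset.mem_image_of_mem _ (Finset.mem_univ u),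
      cls w, Finset.mem_image_of_mem _ (Finset.mem_univ w), hne⟩
  -- counting
  set n := Fintype.card V with hn
  set p := P.card with hp
  have hB : ∀ i : Fin k, ∀ C ∈ P, C.card ≤ (edgesIn ends (F i) C).card + 1 := by
    intro i C hC
    exact conn_count ends (fun e he => (mem_edgesIn ends |>.1 he).2) (hinner2 C hC i)
  have hper : ∀ i : Fin k, ((F i) ∩ crossEdges ends P).card + n ≤ (F i).card + p := by
    intro i
    have h1 := cross_inner_bound ends hPpart (F i)
    have h2 : n ≤ (∑ C ∈ P, (edgesIn ends (F i) C).card) + p := by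
      rw [hn, ← vpartition_sum_card hPpart]
      have : ∑ C ∈ P, C.card ≤ ∑ C ∈ P, ((edgesIn ends (F i) C).card + 1) :=
        Finset.sum_le_sum (fun C hC => hB i C hC)
      rw [Finset.sum_add_distrib] at this
      simpa using this
    omega
  have hcard : ∀ i : Fin k, (F i).card + 1 ≤ n := fun i => forest_card_le ends (hmax.1.2 i)
  have hcard0 : (F i₀).card + 2 ≤ n := forest_card_le_of_disconnected ends (hmax.1.2 i₀) hnr
  -- every cross edge belongs to some forest
  have hcross_sub : crossEdges ends P ⊆ Finset.univ.biUnion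
      (fun i : Fin k => (F i) ∩ crossEdges ends P) := by
    intro e he
    by_cases hfree : ∀ i, e ∉ F i
    · exfalso
      have heD : e ∈ D := hfreeD e hfree
      obtain ⟨a, b, hab⟩ := sym2_exists (ends e)
      have hreach : GReach ends D a b := greach_single ends heD hab
      have := (mem_crossEdges ends).1 he
      refine this ⟨cls a, Finset.mem_image_of_mem _ (Finset.mem_univ a), ?_⟩
      intro v hv
      rw [hab, Sym2.mem_iff] at hv
      rcases hv with rfl | rfl
      · exact hclsmem v
      · exact Finset.mem_filter.2 ⟨Finset.mem_univ _, hreach⟩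
    · push_neg at hfree
      obtain ⟨i, hi⟩ := hfree
      exact Finset.mem_biUnion.2 ⟨i, Finset.mem_univ _, Finset.mem_inter.2 ⟨hi, he⟩⟩
  have hcross_le : (crossEdges ends P).card ≤ ∑ i, ((F i) ∩ crossEdges ends P).card :=
    (Finset.card_le_card hcross_sub).trans (Finset.card_biUnion_le)
  -- sum the per-forest inequalities
  have hsum1 : (∑ i, ((F i) ∩ crossEdges ends P).card) + k * n ≤ total F + k * p := by
    have := Finset.sum_le_sum (fun i (_ : i ∈ Finset.univ) => hper i)
    rw [Finset.sum_add_distrib, Finset.sum_add_distrib] at this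
    simp only [Finset.sum_const, Finset.card_univ, Fintype.card_fin, smul_eq_mul] at this
    unfold total
    omega
  have hsum2 : total F + k + 1 ≤ k * n := by
    unfold total
    have e1 := (Finset.add_sum_erase Finset.univ (fun l => (F l).card)
      (Finset.mem_univ i₀)).symm
    have e2 : ∑ l ∈ Finset.univ.erase i₀, (F l).card ≤ (k - 1) * (n - 1) := by
      calc ∑ l ∈ Finset.univ.erase i₀, (F l).card
          ≤ ∑ _l ∈ Finset.univ.erase i₀, (n - 1) :=
            Finset.sum_le_sum (fun l _ => by have := hcard l; omega)
        _ = (k - 1) * (n - 1) := by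
            rw [Finset.sum_const, smul_eq_mul, Finset.card_erase_of_mem (Finset.mem_univ i₀),
              Finset.card_univ, Fintype.card_fin]
    have e3 : (k - 1) * (n - 1) + (n - 1) = k * (n - 1) := by
      have : k - 1 + 1 = k := by omega
      calc (k - 1) * (n - 1) + (n - 1) = (k - 1 + 1) * (n - 1) := by ring
        _ = k * (n - 1) := by rw [this]
    have e4 : k * (n - 1) + k = k * n := by
      have hn1 : 1 ≤ n := by omega
      calc k * (n - 1) + k = k * (n - 1 + 1) := by ring
        _ = k * n := by rw [Nat.sub_add_cancel hn1]
    have e5 : (F i₀).card + 1 ≤ n - 1 := by omega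
    set R := ∑ l ∈ Finset.univ.erase i₀, (F l).card with hR
    set M := k * (n - 1) with hM
    set N := k * n with hN
    set Q := (k - 1) * (n - 1) with hQ
    omega
  have hcond' := hcond P hPpart hPc
  have e6 : k * p = k * (p - 1) + k := by
    have hp1 : 1 ≤ p := by omega
    calc k * p = k * (p - 1 + 1) := by rw [Nat.sub_add_cancel hp1]
      _ = k * (p - 1) + k := by ring
  set S1 := ∑ i, ((F i) ∩ crossEdges ends P).card with hS1
  set KN := k * n with hKN
  set KP := k * p with hKP
  set KP1 := k * (p - 1) with hKP1
  omega

end FINAL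

end NWT

/-- **Nash-Williams–Tutte.**  A graph `G` contains `k` pairwise edge-disjoint spanning
trees if and only if `ν_f(G) ≥ k`, i.e. iff `|E(P)| / (|P| - 1) ≥ k` for every partition
`P` of `V` with `|P| > 1`. -/
theorem nash_williams_tutte {V β : Type} [Fintype V] [Nonempty V] [Fintype β]
    (ends : β → Sym2 V) (hloopless : ∀ e : β, ¬(ends e).IsDiag) (k : ℕ) :
    (∃ T : Fin k → Finset β,
        (∀ i j, i ≠ j → Disjoint (T i) (T j)) ∧
        ∀ i, IsSpanningTree ends (T i)) ↔
    (∀ P : Finset (Finset V), IsVPartition P → 1 < P.card →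
      (k : ℚ) ≤ ((crossEdges ends P).card : ℚ) / ((P.card : ℚ) - 1)) := by
  classical
  constructor
  · rintro ⟨T, hdisj, htree⟩ P hP hPc
    have hp1 : (1 : ℚ) < (P.card : ℚ) := by exact_mod_cast hPc
    rw [le_div_iff₀ (by linarith : (0 : ℚ) < (P.card : ℚ) - 1)]
    have hN : k * (P.card - 1) ≤ (crossEdges ends P).card := by
      have hsub : Finset.univ.biUnion (fun i : Fin k => T i ∩ crossEdges ends P)
          ⊆ crossEdges ends P := by
        intro e he
        obtain ⟨i, _, hi⟩ := Finset.mem_biUnion.1 he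
        exact (Finset.mem_inter.1 hi).2
      have hdisj2 : ∀ a ∈ (Finset.univ : Finset (Fin k)), ∀ b ∈ Finset.univ, a ≠ b →
          Disjoint (T a ∩ crossEdges ends P) (T b ∩ crossEdges ends P) := by
        intro a _ b _ hab
        exact Finset.disjoint_of_subset_left Finset.inter_subset_left
          (Finset.disjoint_of_subset_right Finset.inter_subset_left (hdisj a b hab))
      have hcb := Finset.card_biUnion hdisj2
      have hle : ∑ i, (T i ∩ crossEdges ends P).card ≤ (crossEdges ends P).card :=
        hcb ▸ Finset.card_le_card hsub
      have hper : ∀ i, P.card - 1 ≤ (T i ∩ crossEdges ends P).card := by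
        intro i
        have := NWT.tree_cross_bound ends hP (htree i)
        omega
      calc k * (P.card - 1) = ∑ _i : Fin k, (P.card - 1) := by
            rw [Finset.sum_const, Finset.card_univ, Fintype.card_fin, smul_eq_mul]
        _ ≤ ∑ i, (T i ∩ crossEdges ends P).card :=
            Finset.sum_le_sum (fun i _ => hper i)
        _ ≤ (crossEdges ends P).card := hle
    have h1 : ((P.card - 1 : ℕ) : ℚ) = (P.card : ℚ) - 1 := by
      rw [Nat.cast_sub (by omega : 1 ≤ P.card)]
      norm_num
    calc (k : ℚ) * ((P.card : ℚ) - 1) = (k : ℚ) * ((P.card - 1 : ℕ) : ℚ) := by rw [h1]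
      _ = ((k * (P.card - 1) : ℕ) : ℚ) := by push_cast; ring
      _ ≤ ((crossEdges ends P).card : ℚ) := by exact_mod_cast hN
  · intro hcond
    rcases Nat.eq_zero_or_pos k with rfl | hk
    · exact ⟨fun i => i.elim0, fun i => i.elim0, fun i => i.elim0⟩
    · have hcondN : ∀ P : Finset (Finset V), IsVPartition P → 1 < P.card →
          k * (P.card - 1) ≤ (crossEdges ends P).card := by
        intro P hP hPc
        have hp1 : (1 : ℚ) < (P.card : ℚ) := by exact_mod_cast hPc
        have hthis := hcond P hP hPc
        rw [le_div_iff₀ (by linarith : (0 : ℚ) < (P.card : ℚ) - 1)] at hthis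
        have h1 : ((P.card - 1 : ℕ) : ℚ) = (P.card : ℚ) - 1 := by
          rw [Nat.cast_sub (by omega : 1 ≤ P.card)]
          norm_num
        have h2 : ((k * (P.card - 1) : ℕ) : ℚ) ≤ ((crossEdges ends P).card : ℚ) := by
          calc ((k * (P.card - 1) : ℕ) : ℚ) = (k : ℚ) * ((P.card - 1 : ℕ) : ℚ) := by
                push_cast; ring
            _ = (k : ℚ) * ((P.card : ℚ) - 1) := by rw [h1]
            _ ≤ ((crossEdges ends P).card : ℚ) := hthis
        exact_mod_cast h2
      obtain ⟨F, hmax⟩ := NWT.exists_maxAdm ends k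
      have hconn := NWT.maxAdm_conn ends hloopless hk hcondN F hmax
      exact ⟨F, hmax.1.1, fun i => ⟨hmax.1.2 i, fun u w => hconn i u w⟩⟩
end

section
/- A digraph D contains k pairwise arc-disjoint spanning arborescences if and only if ν_f(D) ≥ k. -/
/-!
Digraphs may have parallel arcs but no loops.  We model a digraph `D = (V, A)` by a finite
vertex type `V`, a finite arc type `α` and maps `tail head : α → V` with `tail a ≠ head a`.
Subdigraphs are given by their arc sets (`Finset α`) together with vertex sets (`Finset V`).
-/

attribute [local instance] Classical.propDecidable

/-- One step from `u` to `w` along an arc of the arc set `B`. -/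
def DiStep {V α : Type} (tail head : α → V) (B : Finset α) (u w : V) : Prop :=
  ∃ a ∈ B, tail a = u ∧ head a = w

/-- `w` is reachable from `u` by a directed path using arcs of `B`. -/
def DiReach {V α : Type} (tail head : α → V) (B : Finset α) (u w : V) : Prop :=
  Relation.ReflTransGen (DiStep tail head B) u w

/-- `d_B^-(X)`: the number of arcs of `B` with tail outside `X` and head in `X`. -/
noncomputable def inDeg {V α : Type} (tail head : α → V) (B : Finset α) (X : Finset V) : ℕ :=
  (B.filter fun a => tail a ∉ X ∧ head a ∈ X).card

/-- The arc set `B` is an `r`-arborescence with vertex set `S`:  all arcs have both ends in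
`S`, the root `r` has in-degree `0`, every other vertex of `S` has in-degree exactly `1`, and
every vertex of `S` is reachable from `r` (hence there is exactly one directed path from `r`
to each vertex, and the underlying graph is a tree). -/
def IsArborescence {V α : Type} (tail head : α → V) (S : Finset V) (B : Finset α)
    (r : V) : Prop :=
  r ∈ S ∧ (∀ a ∈ B, tail a ∈ S ∧ head a ∈ S) ∧
    (∀ a ∈ B, head a ≠ r) ∧
    (∀ v ∈ S, v ≠ r → (B.filter fun a => head a = v).card = 1) ∧
    ∀ v ∈ S, DiReach tail head B r v

/-- The arc set `B` is a branching with vertex set `S` and root set `R`: every component is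
an arborescence rooted at the member of `R` it contains. -/
def IsBranching {V α : Type} (tail head : α → V) (S : Finset V) (B : Finset α)
    (R : Finset V) : Prop :=
  R ⊆ S ∧ (∀ a ∈ B, tail a ∈ S ∧ head a ∈ S) ∧
    (∀ r ∈ R, ∀ a ∈ B, head a ≠ r) ∧
    (∀ v ∈ S, v ∉ R → (B.filter fun a => head a = v).card = 1) ∧
    ∀ v ∈ S, ∃ r ∈ R, DiReach tail head B r v

/-- The arc set of the component of a branching `B` rooted at `r`. -/
noncomputable def compArcs {V α : Type} (tail head : α → V) (B : Finset α) (r : V) :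
    Finset α :=
  B.filter fun a => DiReach tail head B r (head a)

/-- A subpartition of the vertex set: a family of pairwise disjoint nonempty subsets. -/
def IsSubpartition {V : Type} (P : Finset (Finset V)) : Prop :=
  (∀ X ∈ P, X.Nonempty) ∧ ∀ X ∈ P, ∀ Y ∈ P, X ≠ Y → Disjoint X Y
set_option linter.unusedSectionVars false
section Prelim
variable {V α : Type} {tail head : α → V}

attribute [local instance] Classical.propDecidable

lemma inDeg_eq_sum (B : Finset α) (X : Finset V) :
    inDeg tail head B X = ∑ a ∈ B, (if tail a ∉ X ∧ head a ∈ X then 1 else 0) := by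
  rw [inDeg, Finset.card_filter]

lemma inDeg_mono {B C : Finset α} (h : B ⊆ C) (X : Finset V) :
    inDeg tail head B X ≤ inDeg tail head C X :=
  Finset.card_le_card (Finset.filter_subset_filter _ h)

lemma exists_crossing_arc {B : Finset α} {X : Finset V} {u v : V}
    (hreach : DiReach tail head B u v) (hu : u ∉ X) (hv : v ∈ X) :
    ∃ a ∈ B, tail a ∉ X ∧ head a ∈ X := by
  induction hreach with
  | refl => exact absurd hv hu
  | @tail b c hab hstep ih =>
    by_cases hb : b ∈ X
    · exact ih hb
    · obtain ⟨a, ha, hta, hha⟩ := hstep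
      exact ⟨a, ha, by rw [hta]; exact hb, by rw [hha]; exact hv⟩

lemma one_le_inDeg {B : Finset α} {X : Finset V} {u v : V}
    (hreach : DiReach tail head B u v) (hu : u ∉ X) (hv : v ∈ X) :
    1 ≤ inDeg tail head B X := by
  obtain ⟨a, ha, h1, h2⟩ := exists_crossing_arc hreach hu hv
  have : a ∈ B.filter fun a => tail a ∉ X ∧ head a ∈ X := Finset.mem_filter.2 ⟨ha, h1, h2⟩
  calc 1 ≤ ({a} : Finset α).card := by simp
    _ ≤ _ := Finset.card_le_card (by simpa using this)

lemma sum_inDeg_eq (B : Finset α) (P : Finset (Finset V)) :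
    ∑ X ∈ P, inDeg tail head B X
      = ∑ a ∈ B, (P.filter fun X => tail a ∉ X ∧ head a ∈ X).card := by
  simp only [inDeg_eq_sum, Finset.card_filter]
  exact Finset.sum_comm

lemma subpart_filter_card_le_one {P : Finset (Finset V)} (hP : IsSubpartition P)
    (p : Finset V → Prop) (h : V) :
    (P.filter fun X => (h ∈ X ∧ p X)).card ≤ 1 := by
  apply Finset.card_le_one.2
  intro X hX Y hY
  rw [Finset.mem_filter] at hX hY
  by_contra hne
  exact Finset.disjoint_left.1 (hP.2 X hX.1 Y hY.1 hne) hX.2.1 hY.2.1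

end Prelim
section Easy
variable {V α : Type} [Fintype V] [Fintype α] {tail head : α → V}

attribute [local instance] Classical.propDecidable

lemma sum_inDeg_disjoint_le {k : ℕ} (T : Fin k → Finset α)
    (hdisj : ∀ i j, i ≠ j → Disjoint (T i) (T j)) (X : Finset V) :
    ∑ i, inDeg tail head (T i) X ≤ inDeg tail head (Finset.univ : Finset α) X := by
  simp only [inDeg]
  rw [← Finset.card_biUnion]
  · apply Finset.card_le_card
    intro a ha
    simp only [Finset.mem_biUnion, Finset.mem_filter] at ha ⊢
    obtain ⟨i, _, _, h⟩ := ha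
    exact ⟨Finset.mem_univ a, h⟩
  · intro i _ j _ hij
    exact Finset.disjoint_filter_filter (hdisj i j hij)

lemma easy_core (tail head : α → V) (k : ℕ) (T : Fin k → Finset α) (rt : Fin k → V)
    (harb : ∀ i, IsArborescence tail head Finset.univ (T i) (rt i))
    (hdisj : ∀ i j, i ≠ j → Disjoint (T i) (T j))
    (P : Finset (Finset V)) (hP : IsSubpartition P) :
    k * (P.card - 1) ≤ ∑ X ∈ P, inDeg tail head (Finset.univ : Finset α) X := by
  have step1 : ∀ i, P.card - 1 ≤ ∑ X ∈ P, inDeg tail head (T i) X := by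
    intro i
    obtain ⟨-, -, -, -, hreach⟩ := harb i
    have hfc : (P.filter fun X => rt i ∈ X).card ≤ 1 := by
      have := subpart_filter_card_le_one hP (fun _ => True) (rt i)
      simpa using this
    have hsplit : P.card ≤ (P.filter fun X => rt i ∉ X).card + 1 := by
      have := Finset.card_filter_add_card_filter_not (s := P)
        (p := fun X => rt i ∈ X)
      omega
    calc P.card - 1 ≤ (P.filter fun X => rt i ∉ X).card := by omega
      _ = ∑ X ∈ P.filter fun X => rt i ∉ X, 1 := by simp
      _ ≤ ∑ X ∈ P.filter fun X => rt i ∉ X, inDeg tail head (T i) X := by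
          apply Finset.sum_le_sum
          intro X hX
          rw [Finset.mem_filter] at hX
          obtain ⟨v, hv⟩ := hP.1 X hX.1
          exact one_le_inDeg (hreach v (Finset.mem_univ v)) hX.2 hv
      _ ≤ _ := Finset.sum_le_sum_of_subset (Finset.filter_subset _ _)
  calc k * (P.card - 1) = ∑ _i : Fin k, (P.card - 1) := by
        simp [Finset.sum_const, Nat.mul_comm]
    _ ≤ ∑ i, ∑ X ∈ P, inDeg tail head (T i) X := Finset.sum_le_sum fun i _ => step1 i
    _ = ∑ X ∈ P, ∑ i, inDeg tail head (T i) X := Finset.sum_comm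
    _ ≤ _ := Finset.sum_le_sum fun X _ => sum_inDeg_disjoint_le T hdisj X

end Easy
section Uncross
variable {V : Type} [Fintype V]

attribute [local instance] Classical.propDecidable
set_option linter.unusedSectionVars false

/-- two vertices share a member of `S`. -/
def touch (S : Finset (Finset V)) (u w : V) : Prop := ∃ Z ∈ S, u ∈ Z ∧ w ∈ Z

/-- connected component of `u` in the hypergraph `S`. -/
noncomputable def comp (S : Finset (Finset V)) (u : V) : Finset V :=
  Finset.univ.filter (Relation.ReflTransGen (touch S) u)

noncomputable def ground (S : Finset (Finset V)) : Finset V := S.sup id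

noncomputable def pairsInter (P Q : Finset (Finset V)) : Finset (Finset V) :=
  ((P ×ˢ Q).filter fun p => (p.1 ∩ p.2).Nonempty).image fun p => p.1 ∩ p.2

noncomputable def comps (S : Finset (Finset V)) : Finset (Finset V) :=
  (ground S).image (comp S)

lemma touch_symm {S : Finset (Finset V)} {u w : V} (h : touch S u w) : touch S w u := by
  obtain ⟨Z, h1, h2, h3⟩ := h; exact ⟨Z, h1, h3, h2⟩

lemma mem_comp_self (S : Finset (Finset V)) (u : V) : u ∈ comp S u := by
  simp only [comp, Finset.mem_filter, Finset.mem_univ, true_and]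
  exact Relation.ReflTransGen.refl

lemma mem_comp {S : Finset (Finset V)} {u w : V} :
    w ∈ comp S u ↔ Relation.ReflTransGen (touch S) u w := by
  simp [comp]

lemma comp_eq_of_reach {S : Finset (Finset V)} {u w : V}
    (h : Relation.ReflTransGen (touch S) u w) : comp S u = comp S w := by
  ext x
  simp only [mem_comp]
  constructor
  · intro hx
    exact Relation.ReflTransGen.trans
      ((@Relation.ReflTransGen.symmetric _ (touch S) ⟨fun _ _ => touch_symm⟩).symm _ _ h) hx
  · intro hx
    exact Relation.ReflTransGen.trans h hx

lemma mem_ground {S : Finset (Finset V)} {u : V} :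
    u ∈ ground S ↔ ∃ Z ∈ S, u ∈ Z := by
  simp [ground, Finset.mem_sup]

lemma member_subset_comp {S : Finset (Finset V)} {Z : Finset V} (hZ : Z ∈ S) {u : V}
    (hu : u ∈ Z) : Z ⊆ comp S u := by
  intro w hw
  exact mem_comp.2 (Relation.ReflTransGen.single ⟨Z, hZ, hu, hw⟩)

lemma comp_mem_ground {S : Finset (Finset V)} {u w : V} (hu : u ∈ ground S)
    (hw : w ∈ comp S u) : w ∈ ground S := by
  rw [mem_comp] at hw
  induction hw with
  | refl => exact hu
  | tail _ h ih => obtain ⟨Z, hZ, _, h2⟩ := h; exact mem_ground.2 ⟨Z, hZ, h2⟩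

lemma comps_subpartition (S : Finset (Finset V)) : IsSubpartition (comps S) := by
  constructor
  · rintro X hX
    obtain ⟨u, _, rfl⟩ := Finset.mem_image.1 hX
    exact ⟨u, mem_comp_self S u⟩
  · rintro X hX Y hY hne
    obtain ⟨u, _, rfl⟩ := Finset.mem_image.1 hX
    obtain ⟨w, _, rfl⟩ := Finset.mem_image.1 hY
    rw [Finset.disjoint_left]
    intro x hxu hxw
    exact hne (by rw [comp_eq_of_reach (mem_comp.1 hxu), comp_eq_of_reach (mem_comp.1 hxw)])

lemma pairsInter_subpartition {P Q : Finset (Finset V)} (hP : IsSubpartition P)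
    (hQ : IsSubpartition Q) : IsSubpartition (pairsInter P Q) := by
  constructor
  · rintro W hW
    obtain ⟨p, hp, rfl⟩ := Finset.mem_image.1 hW
    exact (Finset.mem_filter.1 hp).2
  · rintro W hW W' hW' hne
    obtain ⟨⟨X, Y⟩, hp, rfl⟩ := Finset.mem_image.1 hW
    obtain ⟨⟨X', Y'⟩, hp', rfl⟩ := Finset.mem_image.1 hW'
    rw [Finset.mem_filter, Finset.mem_product] at hp hp'
    rw [Finset.disjoint_left]
    intro x hx hx'
    simp only [Finset.mem_inter] at hx hx'
    have hXX : X = X' := by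
      by_contra hne'
      exact Finset.disjoint_left.1 (hP.2 X hp.1.1 X' hp'.1.1 hne') hx.1 hx'.1
    have hYY : Y = Y' := by
      by_contra hne'
      exact Finset.disjoint_left.1 (hQ.2 Y hp.1.2 Y' hp'.1.2 hne') hx.2 hx'.2
    exact hne (by rw [hXX, hYY])

lemma subpartition_subset {P Q : Finset (Finset V)} (h : Q ⊆ P) (hP : IsSubpartition P) :
    IsSubpartition Q :=
  ⟨fun X hX => hP.1 X (h hX), fun X hX Y hY => hP.2 X (h hX) Y (h hY)⟩

lemma mem_comp_of_touch {S : Finset (Finset V)} {u w : V} (h : touch S u w) :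
    w ∈ comp S u := mem_comp.2 (Relation.ReflTransGen.single h)

end Uncross
section Card
variable {V : Type} [Fintype V]

attribute [local instance] Classical.propDecidable
set_option linter.unusedSectionVars false

lemma comp_eq_member {S : Finset (Finset V)} (hS : IsSubpartition S) {X : Finset V}
    (hX : X ∈ S) {u : V} (hu : u ∈ X) : comp S u = X := by
  apply Finset.Subset.antisymm
  · intro w hw
    rw [mem_comp] at hw
    induction hw with
    | refl => exact hu
    | tail hr h ih =>
      obtain ⟨Z, hZ, h1, h2⟩ := h
      have : Z = X := by
        by_contra hne
        exact Finset.disjoint_left.1 (hS.2 Z hZ X hX hne) h1 ih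
      exact this ▸ h2
  · exact member_subset_comp hX hu

lemma comps_eq_self {S : Finset (Finset V)} (hS : IsSubpartition S) : comps S = S := by
  ext W
  constructor
  · intro hW
    obtain ⟨u, hu, rfl⟩ := Finset.mem_image.1 hW
    obtain ⟨Z, hZ, huZ⟩ := mem_ground.1 hu
    rw [comp_eq_member hS hZ huZ]
    exact hZ
  · intro hW
    obtain ⟨u, hu⟩ := hS.1 W hW
    exact Finset.mem_image.2 ⟨u, mem_ground.2 ⟨W, hW, hu⟩, comp_eq_member hS hW hu⟩

/-- the chain lemma: a vertex of the reduced ground set connected (in `S = P ∪ Q`) to `Y`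
reaches, inside `S' = P ∪ Q.erase Y`, a vertex of `Y` still in the reduced ground set. -/
lemma chain_lemma {P Q : Finset (Finset V)} {Y : Finset V} (hYQ : Y ∈ Q)
    (hQ : IsSubpartition Q) {u y₀ : V} (hy₀ : y₀ ∈ Y)
    (hreach : Relation.ReflTransGen (touch (P ∪ Q)) u y₀)
    (hu : u ∈ ground (P ∪ Q.erase Y)) :
    ∃ w, Relation.ReflTransGen (touch (P ∪ Q.erase Y)) u w ∧ w ∈ Y ∧
      w ∈ ground (P ∪ Q.erase Y) := by
  induction hreach using Relation.ReflTransGen.head_induction_on with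
  | refl => exact ⟨y₀, Relation.ReflTransGen.refl, hy₀, hu⟩
  | head hstep htail ih =>
    rename_i a c
    by_cases ha : a ∈ Y
    · exact ⟨a, Relation.ReflTransGen.refl, ha, hu⟩
    · obtain ⟨Z, hZ, h1, h2⟩ := hstep
      have hZ' : Z ∈ P ∪ Q.erase Y := by
        rcases Finset.mem_union.1 hZ with h | h
        · exact Finset.mem_union_left _ h
        · have : Z ≠ Y := fun he => ha (he ▸ h1)
          exact Finset.mem_union_right _ (Finset.mem_erase.2 ⟨this, h⟩)
      have hc : c ∈ ground (P ∪ Q.erase Y) := mem_ground.2 ⟨Z, hZ', h2⟩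
      obtain ⟨w, hw1, hw2, hw3⟩ := ih hc
      exact ⟨w, Relation.ReflTransGen.head ⟨Z, hZ', h1, h2⟩ hw1, hw2, hw3⟩

lemma card_bound {P Q : Finset (Finset V)} (hP : IsSubpartition P) (hQ : IsSubpartition Q) :
    P.card + Q.card ≤ (pairsInter P Q).card + (comps (P ∪ Q)).card := by
  suffices H : ∀ (n : ℕ) (Q : Finset (Finset V)), IsSubpartition Q → Q.card = n →
      P.card + Q.card ≤ (pairsInter P Q).card + (comps (P ∪ Q)).card by
    exact H Q.card Q hQ rfl
  clear hQ Q
  intro n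
  induction n with
  | zero =>
    intro Q hQ hq
    rw [Finset.card_eq_zero] at hq
    subst hq
    have h1 : pairsInter P ∅ = ∅ := by simp [pairsInter]
    rw [h1, Finset.union_empty, comps_eq_self hP]
    simp
  | succ n ih =>
    intro Q hQ hq
    obtain ⟨Y, hY⟩ := Finset.card_pos.1 (by omega : 0 < Q.card)
    set Q' := Q.erase Y with hQ'def
    have hQ' : IsSubpartition Q' := subpartition_subset (Finset.erase_subset _ _) hQ
    have hcard' : Q'.card = n := by
      rw [hQ'def, Finset.card_erase_of_mem hY]; omega
    have IH := ih Q' hQ' hcard'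
    set S := P ∪ Q with hSdef
    set S' := P ∪ Q' with hS'def
    set dset := P.filter (fun X => (X ∩ Y).Nonempty) with hdset
    set d := dset.card with hd
    obtain ⟨y₀, hy₀⟩ := hQ.1 Y hY
    set CY := comp S y₀ with hCY
    -- pairs bound : (pairsInter P Q').card + d ≤ (pairsInter P Q).card
    have pairs_bound : (pairsInter P Q').card + d ≤ (pairsInter P Q).card := by
      have hsub : pairsInter P Q' ∪ dset.image (fun X => X ∩ Y) ⊆ pairsInter P Q := by
        intro W hW
        rcases Finset.mem_union.1 hW with h | h
        · obtain ⟨⟨X, Y'⟩, hp, rfl⟩ := Finset.mem_image.1 h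
          rw [Finset.mem_filter, Finset.mem_product] at hp
          exact Finset.mem_image.2 ⟨(X, Y'), Finset.mem_filter.2
            ⟨Finset.mem_product.2 ⟨hp.1.1, Finset.mem_of_mem_erase hp.1.2⟩, hp.2⟩, rfl⟩
        · obtain ⟨X, hX, rfl⟩ := Finset.mem_image.1 h
          rw [Finset.mem_filter] at hX
          exact Finset.mem_image.2 ⟨(X, Y), Finset.mem_filter.2
            ⟨Finset.mem_product.2 ⟨hX.1, hY⟩, hX.2⟩, rfl⟩
      have hdisj : Disjoint (pairsInter P Q') (dset.image (fun X => X ∩ Y)) := by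
        rw [Finset.disjoint_left]
        rintro W hW hW'
        obtain ⟨⟨X', Y'⟩, hp, rfl⟩ := Finset.mem_image.1 hW
        obtain ⟨X, hX, heq⟩ := Finset.mem_image.1 hW'
        rw [Finset.mem_filter, Finset.mem_product] at hp
        rw [Finset.mem_filter] at hX
        obtain ⟨x, hx⟩ := hp.2
        have hx' : x ∈ X ∩ Y := by
          have h3 : X ∩ Y = X' ∩ Y' := heq
          rw [h3]; exact hx
        have hY'1 : Y' ≠ Y := (Finset.mem_erase.1 hp.1.2).1
        exact Finset.disjoint_left.1 (hQ.2 Y' (Finset.mem_of_mem_erase hp.1.2) Y hY hY'1)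
          (Finset.mem_inter.1 hx).2 (Finset.mem_inter.1 hx').2
      have himgcard : (dset.image (fun X => X ∩ Y)).card = d := by
        rw [hd]
        apply Finset.card_image_of_injOn
        intro X hX X' hX' heq
        rw [hdset, Finset.mem_coe, Finset.mem_filter] at hX hX'
        by_contra hne
        obtain ⟨x, hx⟩ := hX.2
        have : x ∈ X' ∩ Y := by
          have he2 : X ∩ Y = X' ∩ Y := heq
          exact he2 ▸ hx
        exact Finset.disjoint_left.1 (hP.2 X hX.1 X' hX'.1 hne)
          (Finset.mem_inter.1 hx).1 (Finset.mem_inter.1 this).1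
      calc (pairsInter P Q').card + d
          = (pairsInter P Q' ∪ dset.image (fun X => X ∩ Y)).card := by
            rw [Finset.card_union_of_disjoint hdisj, himgcard]
        _ ≤ _ := Finset.card_le_card hsub
    -- comps bound : (comps S').card + 1 ≤ (comps S).card + d
    have hCYmem : CY ∈ comps S := Finset.mem_image.2
      ⟨y₀, mem_ground.2 ⟨Y, Finset.mem_union_right _ hY, hy₀⟩, rfl⟩
    have comps_bound : (comps S').card + 1 ≤ (comps S).card + d := by
      have hsub : comps S' ⊆ (comps S).erase CY ∪
          dset.image (fun X => if h : X.Nonempty then comp S' h.choose else ∅) := by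
        intro C hC
        obtain ⟨u, hu, rfl⟩ := Finset.mem_image.1 hC
        have husub : Relation.ReflTransGen (touch S') u u := Relation.ReflTransGen.refl
        have hmono : ∀ x y, Relation.ReflTransGen (touch S') x y →
            Relation.ReflTransGen (touch S) x y := by
          intro x y h
          refine Relation.ReflTransGen.mono ?_ _ _ h
          rintro a b ⟨Z, hZ, h1, h2⟩
          refine ⟨Z, ?_, h1, h2⟩
          rcases Finset.mem_union.1 hZ with h | h
          · exact Finset.mem_union_left _ h
          · exact Finset.mem_union_right _ (Finset.mem_of_mem_erase h)
        by_cases hcase : comp S u = CY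
        · -- u's component contains Y; find a neighbour X ∈ dset
          have hreach : Relation.ReflTransGen (touch S) u y₀ := by
            have : y₀ ∈ comp S u := hcase ▸ mem_comp_self S y₀
            exact mem_comp.1 this
          obtain ⟨w, hw1, hw2, hw3⟩ := chain_lemma hY hQ hy₀ hreach hu
          obtain ⟨M, hM, hwM⟩ := mem_ground.1 hw3
          have hMP : M ∈ P := by
            rcases Finset.mem_union.1 hM with h | h
            · exact h
            · exfalso
              have hMne : M ≠ Y := (Finset.mem_erase.1 h).1
              exact Finset.disjoint_left.1
                (hQ.2 M (Finset.mem_of_mem_erase h) Y hY hMne) hwM hw2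
          have hMd : M ∈ dset := Finset.mem_filter.2 ⟨hMP, ⟨w, Finset.mem_inter.2 ⟨hwM, hw2⟩⟩⟩
          apply Finset.mem_union_right
          apply Finset.mem_image.2
          refine ⟨M, hMd, ?_⟩
          have hMne : M.Nonempty := ⟨w, hwM⟩
          rw [dif_pos hMne]
          have h1 : comp S' hMne.choose = comp S' w := by
            apply comp_eq_of_reach
            exact Relation.ReflTransGen.single ⟨M, Finset.mem_union_left _ hMP,
              hMne.choose_spec, hwM⟩
          have h2 : comp S' w = comp S' u :=
            (comp_eq_of_reach hw1).symm
          rw [h1, h2]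
        · -- u's component avoids Y entirely, and is unchanged
          apply Finset.mem_union_left
          have hYdisj : ∀ y ∈ Y, y ∉ comp S u := by
            intro y hy hmem
            apply hcase
            have h1 : comp S u = comp S y := comp_eq_of_reach (mem_comp.1 hmem)
            have h2 : comp S y = comp S y₀ := comp_eq_of_reach
              (Relation.ReflTransGen.single ⟨Y, Finset.mem_union_right _ hY, hy, hy₀⟩)
            rw [h1, h2]
          have hequal : comp S' u = comp S u := by
            apply Finset.Subset.antisymm
            · intro w hw
              exact mem_comp.2 (hmono _ _ (mem_comp.1 hw))
            · intro w hw
              rw [mem_comp] at hw ⊢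
              clear hu
              induction hw with
              | refl => exact Relation.ReflTransGen.refl
              | @tail b c hr hstep ih2 =>
                obtain ⟨Z, hZ, h1, h2⟩ := hstep
                have hZ' : Z ∈ S' := by
                  rcases Finset.mem_union.1 hZ with h | h
                  · exact Finset.mem_union_left _ h
                  · refine Finset.mem_union_right _ (Finset.mem_erase.2 ⟨?_, h⟩)
                    intro he
                    subst he
                    exact hYdisj b h1 (mem_comp.2 hr)
                exact Relation.ReflTransGen.tail ih2 ⟨Z, hZ', h1, h2⟩
          rw [hequal]
          apply Finset.mem_erase.2
          refine ⟨hcase, ?_⟩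
          apply Finset.mem_image.2
          refine ⟨u, ?_, rfl⟩
          obtain ⟨Z, hZ, huZ⟩ := mem_ground.1 hu
          refine mem_ground.2 ⟨Z, ?_, huZ⟩
          rcases Finset.mem_union.1 hZ with h | h
          · exact Finset.mem_union_left _ h
          · exact Finset.mem_union_right _ (Finset.mem_of_mem_erase h)
      calc (comps S').card + 1
          ≤ ((comps S).erase CY ∪ dset.image
              (fun X => if h : X.Nonempty then comp S' h.choose else ∅)).card + 1 :=
            by exact Nat.add_le_add_right (Finset.card_le_card hsub) 1
        _ ≤ ((comps S).erase CY).card + d + 1 := by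
            have := Finset.card_union_le ((comps S).erase CY)
              (dset.image (fun X => if h : X.Nonempty then comp S' h.choose else ∅))
            have h2 := Finset.card_image_le (s := dset)
              (f := fun X => if h : X.Nonempty then comp S' h.choose else ∅)
            omega
        _ ≤ _ := by
            rw [Finset.card_erase_of_mem hCYmem]
            have : 1 ≤ (comps S).card := Finset.card_pos.2 ⟨CY, hCYmem⟩
            omega
    omega

end Card
section Count
variable {V : Type} [Fintype V]

attribute [local instance] Classical.propDecidable
set_option linter.unusedSectionVars false

lemma cnt_le_one {R : Finset (Finset V)} (hR : IsSubpartition R) {p : Finset V → Prop}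
    [DecidablePred p] {h : V} (hp : ∀ X, p X → h ∈ X) : (R.filter p).card ≤ 1 := by
  apply Finset.card_le_one.2
  intro X hX Y hY
  rw [Finset.mem_filter] at hX hY
  by_contra hne
  exact Finset.disjoint_left.1 (hR.2 X hX.1 Y hY.1 hne) (hp X hX.2) (hp Y hY.2)

lemma per_arc {P Q : Finset (Finset V)} (hP : IsSubpartition P) (hQ : IsSubpartition Q)
    (u h : V) :
    ((pairsInter P Q).filter fun X => u ∉ X ∧ h ∈ X).card +
      ((comps (P ∪ Q)).filter fun X => u ∉ X ∧ h ∈ X).card ≤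
    (P.filter fun X => u ∉ X ∧ h ∈ X).card + (Q.filter fun X => u ∉ X ∧ h ∈ X).card := by
  set S := P ∪ Q with hS
  have hc1le : ((pairsInter P Q).filter fun X => u ∉ X ∧ h ∈ X).card ≤ 1 :=
    cnt_le_one (pairsInter_subpartition hP hQ) (fun X hX => hX.2)
  have hc2le : ((comps S).filter fun X => u ∉ X ∧ h ∈ X).card ≤ 1 :=
    cnt_le_one (comps_subpartition S) (fun X hX => hX.2)
  by_cases hc2 : ∃ Z ∈ comps S, u ∉ Z ∧ h ∈ Z
  · obtain ⟨Z, hZmem, hZu, hZh⟩ := hc2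
    obtain ⟨z, hz, rfl⟩ := Finset.mem_image.1 hZmem
    have hZcomp : comp S z = comp S h := comp_eq_of_reach (mem_comp.1 hZh)
    have hground : h ∈ ground S := comp_mem_ground hz hZh
    obtain ⟨M, hM, hhM⟩ := mem_ground.1 hground
    have hMsub : M ⊆ comp S z := by
      rw [hZcomp]; exact member_subset_comp hM hhM
    by_cases hhP : ∃ X ∈ P, h ∈ X
    · obtain ⟨X, hXP, hhX⟩ := hhP
      have hXu : u ∉ X := fun hu =>
        hZu (hZcomp ▸ member_subset_comp (Finset.mem_union_left _ hXP) hhX hu)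
      have hcP : 1 ≤ (P.filter fun X => u ∉ X ∧ h ∈ X).card :=
        Finset.card_pos.2 ⟨X, Finset.mem_filter.2 ⟨hXP, hXu, hhX⟩⟩
      by_cases hhQ : ∃ Y ∈ Q, h ∈ Y
      · obtain ⟨Y, hYQ, hhY⟩ := hhQ
        have hYu : u ∉ Y := fun hu =>
          hZu (hZcomp ▸ member_subset_comp (Finset.mem_union_right _ hYQ) hhY hu)
        have hcQ : 1 ≤ (Q.filter fun X => u ∉ X ∧ h ∈ X).card :=
          Finset.card_pos.2 ⟨Y, Finset.mem_filter.2 ⟨hYQ, hYu, hhY⟩⟩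
        omega
      · have hc1 : ((pairsInter P Q).filter fun X => u ∉ X ∧ h ∈ X).card = 0 := by
          rw [Finset.card_eq_zero, Finset.filter_eq_empty_iff]
          rintro W hW ⟨-, hhW⟩
          obtain ⟨⟨X', Y'⟩, hp, rfl⟩ := Finset.mem_image.1 hW
          rw [Finset.mem_filter, Finset.mem_product] at hp
          exact hhQ ⟨Y', hp.1.2, (Finset.mem_inter.1 hhW).2⟩
        omega
    · have hMQ : M ∈ Q := by
        rcases Finset.mem_union.1 hM with hm | hm
        · exact absurd ⟨M, hm, hhM⟩ hhP
        · exact hm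
      have hMu : u ∉ M := fun hu => hZu (hMsub hu)
      have hcQ : 1 ≤ (Q.filter fun X => u ∉ X ∧ h ∈ X).card :=
        Finset.card_pos.2 ⟨M, Finset.mem_filter.2 ⟨hMQ, hMu, hhM⟩⟩
      have hc1 : ((pairsInter P Q).filter fun X => u ∉ X ∧ h ∈ X).card = 0 := by
        rw [Finset.card_eq_zero, Finset.filter_eq_empty_iff]
        rintro W hW ⟨-, hhW⟩
        obtain ⟨⟨X', Y'⟩, hp, rfl⟩ := Finset.mem_image.1 hW
        rw [Finset.mem_filter, Finset.mem_product] at hp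
        exact hhP ⟨X', hp.1.1, (Finset.mem_inter.1 hhW).1⟩
      omega
  · have hc2z : ((comps S).filter fun X => u ∉ X ∧ h ∈ X).card = 0 := by
      rw [Finset.card_eq_zero, Finset.filter_eq_empty_iff]
      rintro Z hZ ⟨h1, h2⟩
      exact hc2 ⟨Z, hZ, h1, h2⟩
    by_cases hc1 : ∃ W ∈ pairsInter P Q, u ∉ W ∧ h ∈ W
    · obtain ⟨W, hW, hWu, hWh⟩ := hc1
      obtain ⟨⟨X, Y⟩, hp, rfl⟩ := Finset.mem_image.1 hW
      rw [Finset.mem_filter, Finset.mem_product] at hp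
      rw [Finset.mem_inter] at hWh
      rcases (by by_contra huu; push_neg at huu; exact hWu (Finset.mem_inter.2 ⟨huu.1, huu.2⟩) :
          u ∉ X ∨ u ∉ Y) with hx | hy
      · have : 1 ≤ (P.filter fun X => u ∉ X ∧ h ∈ X).card :=
          Finset.card_pos.2 ⟨X, Finset.mem_filter.2 ⟨hp.1.1, hx, hWh.1⟩⟩
        omega
      · have : 1 ≤ (Q.filter fun X => u ∉ X ∧ h ∈ X).card :=
          Finset.card_pos.2 ⟨Y, Finset.mem_filter.2 ⟨hp.1.2, hy, hWh.2⟩⟩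
        omega
    · have hc1z : ((pairsInter P Q).filter fun X => u ∉ X ∧ h ∈ X).card = 0 := by
        rw [Finset.card_eq_zero, Finset.filter_eq_empty_iff]
        rintro W hW ⟨h1, h2⟩
        exact hc1 ⟨W, hW, h1, h2⟩
      omega

lemma per_vertex {P Q : Finset (Finset V)} (hP : IsSubpartition P) (hQ : IsSubpartition Q)
    (h : V) :
    ((pairsInter P Q).filter fun X => h ∈ X).card +
      ((comps (P ∪ Q)).filter fun X => h ∈ X).card ≤
    (P.filter fun X => h ∈ X).card + (Q.filter fun X => h ∈ X).card := by
  set S := P ∪ Q with hS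
  have hc1le : ((pairsInter P Q).filter fun X => h ∈ X).card ≤ 1 :=
    cnt_le_one (pairsInter_subpartition hP hQ) (fun X hX => hX)
  have hc2le : ((comps S).filter fun X => h ∈ X).card ≤ 1 :=
    cnt_le_one (comps_subpartition S) (fun X hX => hX)
  by_cases hc2 : ∃ Z ∈ comps S, h ∈ Z
  · obtain ⟨Z, hZmem, hZh⟩ := hc2
    obtain ⟨z, hz, rfl⟩ := Finset.mem_image.1 hZmem
    have hground : h ∈ ground S := comp_mem_ground hz hZh
    obtain ⟨M, hM, hhM⟩ := mem_ground.1 hground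
    by_cases hhP : ∃ X ∈ P, h ∈ X
    · obtain ⟨X, hXP, hhX⟩ := hhP
      have hcP : 1 ≤ (P.filter fun X => h ∈ X).card :=
        Finset.card_pos.2 ⟨X, Finset.mem_filter.2 ⟨hXP, hhX⟩⟩
      by_cases hhQ : ∃ Y ∈ Q, h ∈ Y
      · obtain ⟨Y, hYQ, hhY⟩ := hhQ
        have hcQ : 1 ≤ (Q.filter fun X => h ∈ X).card :=
          Finset.card_pos.2 ⟨Y, Finset.mem_filter.2 ⟨hYQ, hhY⟩⟩
        omega
      · have hc1 : ((pairsInter P Q).filter fun X => h ∈ X).card = 0 := by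
          rw [Finset.card_eq_zero, Finset.filter_eq_empty_iff]
          rintro W hW hhW
          obtain ⟨⟨X', Y'⟩, hp, rfl⟩ := Finset.mem_image.1 hW
          rw [Finset.mem_filter, Finset.mem_product] at hp
          exact hhQ ⟨Y', hp.1.2, (Finset.mem_inter.1 hhW).2⟩
        omega
    · have hMQ : M ∈ Q := by
        rcases Finset.mem_union.1 hM with hm | hm
        · exact absurd ⟨M, hm, hhM⟩ hhP
        · exact hm
      have hcQ : 1 ≤ (Q.filter fun X => h ∈ X).card :=
        Finset.card_pos.2 ⟨M, Finset.mem_filter.2 ⟨hMQ, hhM⟩⟩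
      have hc1 : ((pairsInter P Q).filter fun X => h ∈ X).card = 0 := by
        rw [Finset.card_eq_zero, Finset.filter_eq_empty_iff]
        rintro W hW hhW
        obtain ⟨⟨X', Y'⟩, hp, rfl⟩ := Finset.mem_image.1 hW
        rw [Finset.mem_filter, Finset.mem_product] at hp
        exact hhP ⟨X', hp.1.1, (Finset.mem_inter.1 hhW).1⟩
      omega
  · have hc2z : ((comps S).filter fun X => h ∈ X).card = 0 := by
      rw [Finset.card_eq_zero, Finset.filter_eq_empty_iff]
      rintro Z hZ h2
      exact hc2 ⟨Z, hZ, h2⟩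
    by_cases hc1 : ∃ W ∈ pairsInter P Q, h ∈ W
    · obtain ⟨W, hW, hWh⟩ := hc1
      obtain ⟨⟨X, Y⟩, hp, rfl⟩ := Finset.mem_image.1 hW
      rw [Finset.mem_filter, Finset.mem_product] at hp
      rw [Finset.mem_inter] at hWh
      have h1 : 1 ≤ (P.filter fun X => h ∈ X).card :=
        Finset.card_pos.2 ⟨X, Finset.mem_filter.2 ⟨hp.1.1, hWh.1⟩⟩
      omega
    · have hc1z : ((pairsInter P Q).filter fun X => h ∈ X).card = 0 := by
        rw [Finset.card_eq_zero, Finset.filter_eq_empty_iff]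
        rintro W hW h2
        exact hc1 ⟨W, hW, h2⟩
      omega

end Count
section Sums
variable {V α : Type} [Fintype V] [Fintype α]

attribute [local instance] Classical.propDecidable
set_option linter.unusedSectionVars false

lemma sum_token_eq (t : V → ℕ) (R : Finset (Finset V)) :
    ∑ X ∈ R, ∑ v ∈ X, t v = ∑ v : V, (R.filter fun X => v ∈ X).card * t v := by
  have e1 : ∀ X : Finset V, ∑ v ∈ X, t v = ∑ v : V, if v ∈ X then t v else 0 := by
    intro X
    rw [Finset.sum_ite_mem]
    congr 1
    exact (Finset.univ_inter X).symm
  simp only [e1]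
  rw [Finset.sum_comm]
  congr 1
  ext v
  rw [← Finset.sum_filter, Finset.sum_const, smul_eq_mul]

/-- the combined weight of a vertex set: in-degree plus tokens inside. -/
noncomputable def wt (tail head : α → V) (A : Finset α) (t : V → ℕ) (X : Finset V) : ℕ :=
  inDeg tail head A X + ∑ v ∈ X, t v

lemma uncross_sums (tail head : α → V) (A : Finset α) (t : V → ℕ)
    {P Q : Finset (Finset V)} (hP : IsSubpartition P) (hQ : IsSubpartition Q) :
    (∑ W ∈ pairsInter P Q, wt tail head A t W) + (∑ Z ∈ comps (P ∪ Q), wt tail head A t Z)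
      ≤ (∑ X ∈ P, wt tail head A t X) + (∑ Y ∈ Q, wt tail head A t Y) := by
  simp only [wt, Finset.sum_add_distrib]
  have harc : (∑ W ∈ pairsInter P Q, inDeg tail head A W) +
      (∑ Z ∈ comps (P ∪ Q), inDeg tail head A Z) ≤
      (∑ X ∈ P, inDeg tail head A X) + (∑ Y ∈ Q, inDeg tail head A Y) := by
    rw [sum_inDeg_eq, sum_inDeg_eq, sum_inDeg_eq, sum_inDeg_eq, ← Finset.sum_add_distrib,
      ← Finset.sum_add_distrib]
    exact Finset.sum_le_sum fun a _ => per_arc hP hQ (tail a) (head a)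
  have htok : (∑ W ∈ pairsInter P Q, ∑ v ∈ W, t v) +
      (∑ Z ∈ comps (P ∪ Q), ∑ v ∈ Z, t v) ≤
      (∑ X ∈ P, ∑ v ∈ X, t v) + (∑ Y ∈ Q, ∑ v ∈ Y, t v) := by
    rw [sum_token_eq, sum_token_eq, sum_token_eq, sum_token_eq, ← Finset.sum_add_distrib,
      ← Finset.sum_add_distrib]
    apply Finset.sum_le_sum
    intro v _
    have := Nat.mul_le_mul_right (t v) (per_vertex hP hQ v)
    rw [Nat.add_mul, Nat.add_mul] at this
    exact this
  omega

end Sums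
section Token
variable {V α : Type} [Fintype V] [Fintype α]

attribute [local instance] Classical.propDecidable
set_option linter.unusedSectionVars false

lemma wt_bump (tail head : α → V) (A : Finset α) (t : V → ℕ) (v : V) (X : Finset V) :
    wt tail head A (fun w => if w = v then t w + 1 else t w) X
      = wt tail head A t X + (if v ∈ X then 1 else 0) := by
  simp only [wt]
  have : ∑ w ∈ X, (if w = v then t w + 1 else t w)
      = ∑ w ∈ X, (t w + if w = v then 1 else 0) := by
    apply Finset.sum_congr rfl
    intro w _
    split <;> simp
  rw [this, Finset.sum_add_distrib, Finset.sum_ite_eq' X v (fun _ => 1)]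
  omega

lemma sum_bump (t : V → ℕ) (v : V) :
    ∑ w : V, (if w = v then t w + 1 else t w) = (∑ w : V, t w) + 1 := by
  have : ∀ w : V, (if w = v then t w + 1 else t w) = t w + if w = v then 1 else 0 := by
    intro w; split <;> simp
  simp only [this]
  rw [Finset.sum_add_distrib, Finset.sum_ite_eq' Finset.univ v (fun _ => 1)]
  simp

lemma token_selection (tail head : α → V) (A : Finset α) (k : ℕ) [Nonempty V] :
    ∀ (m : ℕ) (t : V → ℕ),
    (∀ P : Finset (Finset V), IsSubpartition P → ∑ X ∈ P, (k - wt tail head A t X) ≤ m) →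
    ∃ t' : V → ℕ, (∀ v, t v ≤ t' v) ∧ (∑ v : V, t' v) = (∑ v : V, t v) + m ∧
      ∀ X : Finset V, X.Nonempty → k ≤ wt tail head A t' X := by
  intro m
  induction m with
  | zero =>
    intro t hyp
    refine ⟨t, fun v => le_rfl, by simp, ?_⟩
    intro X hX
    have h1 : IsSubpartition ({X} : Finset (Finset V)) := by
      constructor
      · intro Y hY; rw [Finset.mem_singleton] at hY; subst hY; exact hX
      · intro Y hY Z hZ hne
        rw [Finset.mem_singleton] at hY hZ
        exact absurd (hY.trans hZ.symm) hne
    have := hyp {X} h1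
    simp at this
    omega
  | succ m ih =>
    intro t hyp
    -- a helper to finish once we know a good bump vertex
    have finish : ∀ v : V,
        (∀ P : Finset (Finset V), IsSubpartition P →
          ∑ X ∈ P, (k - wt tail head A (fun w => if w = v then t w + 1 else t w) X) ≤ m) →
        ∃ t' : V → ℕ, (∀ v, t v ≤ t' v) ∧ (∑ v : V, t' v) = (∑ v : V, t v) + (m + 1) ∧
          ∀ X : Finset V, X.Nonempty → k ≤ wt tail head A t' X := by
      intro v hgood
      obtain ⟨t', h1, h2, h3⟩ := ih (fun w => if w = v then t w + 1 else t w) hgood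
      refine ⟨t', ?_, ?_, h3⟩
      · intro w
        have h0 := h1 w
        by_cases hw : w = v
        · subst hw; simp at h0; omega
        · simp [hw] at h0; omega
      · rw [h2, sum_bump]; omega
    by_cases hA : ∀ P : Finset (Finset V), IsSubpartition P →
        ∑ X ∈ P, (k - wt tail head A t X) ≤ m
    · obtain ⟨v⟩ := ‹Nonempty V›
      apply finish v
      intro P hP
      calc ∑ X ∈ P, (k - wt tail head A (fun w => if w = v then t w + 1 else t w) X)
          ≤ ∑ X ∈ P, (k - wt tail head A t X) := by
            apply Finset.sum_le_sum
            intro X _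
            rw [wt_bump]
            omega
        _ ≤ m := hA P hP
    · push_neg at hA
      obtain ⟨P₀, hP₀sub, hP₀sum⟩ := hA
      -- the candidate family
      set cand : Finset (Finset (Finset V)) := Finset.univ.filter
        (fun P => IsSubpartition P ∧ (∑ X ∈ P, (k - wt tail head A t X)) = m + 1 ∧
          ∀ X ∈ P, wt tail head A t X < k) with hcand
      have hP₀' : P₀.filter (fun X => wt tail head A t X < k) ∈ cand := by
        rw [hcand, Finset.mem_filter]
        have hsump : ∑ X ∈ P₀.filter (fun X => wt tail head A t X < k),
            (k - wt tail head A t X) = ∑ X ∈ P₀, (k - wt tail head A t X) := by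
          apply (Finset.sum_filter_of_ne ?_)
          intro X _ hne
          by_contra hlt
          push_neg at hlt
          omega
        refine ⟨Finset.mem_univ _, subpartition_subset (Finset.filter_subset _ _) hP₀sub, ?_, ?_⟩
        · have := hyp P₀ hP₀sub
          omega
        · intro X hX
          exact (Finset.mem_filter.1 hX).2
      obtain ⟨Pst, hPstmem, hPstmin⟩ := Finset.exists_min_image cand
        (fun P => (P.sup id).card) ⟨_, hP₀'⟩
      rw [hcand, Finset.mem_filter] at hPstmem
      obtain ⟨-, hPsub, hPsum, hPpos⟩ := hPstmem
      -- pick v in the ground set of Pst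
      have hPne : ∃ X, X ∈ Pst := by
        by_contra hempty
        push_neg at hempty
        have : Pst = ∅ := Finset.eq_empty_of_forall_notMem hempty
        rw [this] at hPsum
        simp at hPsum
      obtain ⟨X₀, hX₀⟩ := hPne
      obtain ⟨v, hv⟩ := hPsub.1 X₀ hX₀
      apply finish v
      -- main claim: bumping at v decreases every full subpartition
      intro Q hQ
      by_contra hQbad
      push_neg at hQbad
      set t₁ : V → ℕ := fun w => if w = v then t w + 1 else t w with ht₁
      have hmono : ∀ X, (k - wt tail head A t₁ X) ≤ (k - wt tail head A t X) := by
        intro X; rw [ht₁, wt_bump]; omega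
      have hQfull : ∑ X ∈ Q, (k - wt tail head A t X) = m + 1 := by
        have h1 := hyp Q hQ
        have h2 : m + 1 ≤ ∑ X ∈ Q, (k - wt tail head A t₁ X) := hQbad
        have h3 : ∑ X ∈ Q, (k - wt tail head A t₁ X) ≤ ∑ X ∈ Q, (k - wt tail head A t X) :=
          Finset.sum_le_sum fun X _ => hmono X
        omega
      have hQeq : ∀ Y ∈ Q, (k - wt tail head A t₁ Y) = (k - wt tail head A t Y) := by
        intro Y hY
        by_contra hne
        have hlt : (k - wt tail head A t₁ Y) < (k - wt tail head A t Y) := by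
          have := hmono Y; omega
        have : ∑ X ∈ Q, (k - wt tail head A t₁ X) < ∑ X ∈ Q, (k - wt tail head A t X) :=
          Finset.sum_lt_sum (fun X _ => hmono X) ⟨Y, hY, hlt⟩
        have h2 : m + 1 ≤ ∑ X ∈ Q, (k - wt tail head A t₁ X) := hQbad
        omega
      set Q' := Q.filter (fun X => wt tail head A t X < k) with hQ'
      have hQ'sub : IsSubpartition Q' := subpartition_subset (Finset.filter_subset _ _) hQ
      have hQ'sum : ∑ X ∈ Q', (k - wt tail head A t X) = m + 1 := by
        rw [hQ']
        rw [Finset.sum_filter_of_ne]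
        · exact hQfull
        · intro X _ hne
          by_contra hlt
          push_neg at hlt
          omega
      -- uncross Pst and Q'
      set R₁ := pairsInter Pst Q' with hR₁
      set R₂ := comps (Pst ∪ Q') with hR₂
      have hR₁sub : IsSubpartition R₁ := pairsInter_subpartition hPsub hQ'sub
      have hR₂sub : IsSubpartition R₂ := comps_subpartition _
      have S1 : ∑ X ∈ R₁, k ≤
          (∑ X ∈ R₁, (k - wt tail head A t X)) + ∑ X ∈ R₁, wt tail head A t X := by
        rw [← Finset.sum_add_distrib]
        apply Finset.sum_le_sum
        intro X _; omega
      have S2 : ∑ X ∈ R₂, k ≤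
          (∑ X ∈ R₂, (k - wt tail head A t X)) + ∑ X ∈ R₂, wt tail head A t X := by
        rw [← Finset.sum_add_distrib]
        apply Finset.sum_le_sum
        intro X _; omega
      have S3 : (∑ X ∈ Pst, (k - wt tail head A t X)) + ∑ X ∈ Pst, wt tail head A t X
          = ∑ X ∈ Pst, k := by
        rw [← Finset.sum_add_distrib]
        apply Finset.sum_congr rfl
        intro X hX
        have := hPpos X hX
        omega
      have S4 : (∑ X ∈ Q', (k - wt tail head A t X)) + ∑ X ∈ Q', wt tail head A t X
          = ∑ X ∈ Q', k := by
        rw [← Finset.sum_add_distrib]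
        apply Finset.sum_congr rfl
        intro X hX
        have := (Finset.mem_filter.1 hX).2
        omega
      have S5 : (∑ X ∈ Pst, k) + (∑ X ∈ Q', k) ≤ (∑ X ∈ R₁, k) + (∑ X ∈ R₂, k) := by
        simp only [Finset.sum_const, smul_eq_mul]
        have := card_bound hPsub hQ'sub
        calc Pst.card * k + Q'.card * k = (Pst.card + Q'.card) * k := by ring
          _ ≤ ((pairsInter Pst Q').card + (comps (Pst ∪ Q')).card) * k :=
            Nat.mul_le_mul_right k this
          _ = _ := by ring
      have S6 := uncross_sums tail head A t hPsub hQ'sub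
      have S7 : ∑ X ∈ R₂, (k - wt tail head A t X) ≤ m + 1 := hyp R₂ hR₂sub
      rw [← hR₁, ← hR₂] at S6
      have hR₁big : m + 1 ≤ ∑ X ∈ R₁, (k - wt tail head A t X) := by
        simp only [wt] at S1 S2 S3 S4 S5 S7 hPsum hQ'sum S6 ⊢
        omega
      have hR₁small : ∑ X ∈ R₁, (k - wt tail head A t X) ≤ m + 1 := hyp R₁ hR₁sub
      -- R₁ restricted to deficient members is a candidate with smaller ground set
      set R₁' := R₁.filter (fun X => wt tail head A t X < k) with hR₁'
      have hR₁'sum : ∑ X ∈ R₁', (k - wt tail head A t X) = m + 1 := by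
        rw [hR₁', Finset.sum_filter_of_ne]
        · omega
        · intro X _ hne
          by_contra hlt
          push_neg at hlt
          omega
      have hR₁'cand : R₁' ∈ cand := by
        rw [hcand, Finset.mem_filter]
        refine ⟨Finset.mem_univ _,
          subpartition_subset (Finset.filter_subset _ _) hR₁sub, hR₁'sum, ?_⟩
        intro X hX
        exact (Finset.mem_filter.1 hX).2
      have hgr : R₁'.sup id ⊆ Pst.sup id := by
        intro x hx
        rw [Finset.mem_sup] at hx ⊢
        obtain ⟨W, hW, hxW⟩ := hx
        have hW1 : W ∈ R₁ := Finset.filter_subset _ _ hW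
        obtain ⟨⟨X, Y⟩, hp, rfl⟩ := Finset.mem_image.1 hW1
        rw [Finset.mem_filter, Finset.mem_product] at hp
        exact ⟨X, hp.1.1, (Finset.mem_inter.1 hxW).1⟩
      have hgrQ : R₁'.sup id ⊆ Q'.sup id := by
        intro x hx
        rw [Finset.mem_sup] at hx ⊢
        obtain ⟨W, hW, hxW⟩ := hx
        have hW1 : W ∈ R₁ := Finset.filter_subset _ _ hW
        obtain ⟨⟨X, Y⟩, hp, rfl⟩ := Finset.mem_image.1 hW1
        rw [Finset.mem_filter, Finset.mem_product] at hp
        exact ⟨Y, hp.1.2, (Finset.mem_inter.1 hxW).2⟩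
      have hmin := hPstmin R₁' hR₁'cand
      have hgeq : R₁'.sup id = Pst.sup id :=
        Finset.eq_of_subset_of_card_le hgr hmin
      -- v lies in the ground set of Q', giving the contradiction
      have hvQ : v ∈ Q'.sup id := by
        apply hgrQ
        rw [hgeq]
        exact Finset.mem_sup.2 ⟨X₀, hX₀, hv⟩
      rw [Finset.mem_sup] at hvQ
      obtain ⟨Y, hYQ', hvY0⟩ := hvQ
      have hvY : v ∈ Y := hvY0
      have hYQ : Y ∈ Q := Finset.filter_subset _ _ hYQ'
      have hydef := (Finset.mem_filter.1 hYQ').2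
      have := hQeq Y hYQ
      rw [ht₁, wt_bump, if_pos hvY] at this
      omega

end Token
section Edmonds
variable {V α : Type} [Fintype V] [Fintype α]

attribute [local instance] Classical.propDecidable
set_option linter.unusedSectionVars false

lemma inDeg_submod (tail head : α → V) (B : Finset α) (X Y : Finset V) :
    inDeg tail head B (X ∩ Y) + inDeg tail head B (X ∪ Y)
      ≤ inDeg tail head B X + inDeg tail head B Y := by
  simp only [inDeg_eq_sum]
  rw [← Finset.sum_add_distrib, ← Finset.sum_add_distrib]
  apply Finset.sum_le_sum
  intro a _
  by_cases h1 : tail a ∈ X <;> by_cases h2 : tail a ∈ Y <;>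
    by_cases h3 : head a ∈ X <;> by_cases h4 : head a ∈ Y <;>
    simp [Finset.mem_inter, Finset.mem_union, h1, h2, h3, h4]

lemma DiReach_mono {tail head : α → V} {B B' : Finset α} (h : B ⊆ B') {u w : V}
    (hr : DiReach tail head B u w) : DiReach tail head B' u w := by
  refine Relation.ReflTransGen.mono ?_ _ _ hr
  rintro x y ⟨a, ha, h1, h2⟩
  exact ⟨a, h ha, h1, h2⟩

lemma inDeg_eq_of_no_head {tail head : α → V} {A F : Finset α} {X : Finset V}
    (hF : ∀ f ∈ F, head f ∉ X) (hFA : F ⊆ A) :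
    inDeg tail head (A \ F) X = inDeg tail head A X := by
  unfold inDeg
  congr 1
  apply Finset.Subset.antisymm
  · exact Finset.filter_subset_filter _ (Finset.sdiff_subset)
  · intro a ha
    rw [Finset.mem_filter] at ha ⊢
    refine ⟨Finset.mem_sdiff.2 ⟨ha.1, fun hf => hF a hf ha.2.2⟩, ha.2⟩

lemma grow (tail head : α → V) (A : Finset α) (k : ℕ) (hk : 1 ≤ k) (r : V)
    (hcut : ∀ X : Finset V, X.Nonempty → r ∉ X → k ≤ inDeg tail head A X) :
    ∀ (n : ℕ) (S : Finset V) (F : Finset α), Sᶜ.card = n → F ⊆ A →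
    IsArborescence tail head S F r →
    (∀ X : Finset V, X.Nonempty → r ∉ X → k - 1 ≤ inDeg tail head (A \ F) X) →
    ∃ F', F ⊆ F' ∧ F' ⊆ A ∧ IsArborescence tail head Finset.univ F' r ∧
      (∀ X : Finset V, X.Nonempty → r ∉ X → k - 1 ≤ inDeg tail head (A \ F') X) := by
  intro n
  induction n with
  | zero =>
    intro S F hn hFA harb hinv
    have hS : S = Finset.univ := by
      have : Sᶜ = ∅ := Finset.card_eq_zero.1 hn
      rwa [Finset.compl_eq_empty_iff] at this
    exact ⟨F, Finset.Subset.refl F, hFA, hS ▸ harb, hinv⟩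
  | succ n ih =>
    intro S F hn hFA harb hinv
    obtain ⟨hrS, hends, hheads, hindeg, hreach⟩ := harb
    have hFheadS : ∀ f ∈ F, head f ∈ S := fun f hf => (hends f hf).2
    have hScne : Sᶜ.Nonempty := Finset.card_pos.1 (by omega)
    have hrSc : r ∉ Sᶜ := by simp [hrS]
    have hScdeg : k ≤ inDeg tail head (A \ F) Sᶜ := by
      rw [inDeg_eq_of_no_head (fun f hf => by simp [hFheadS f hf]) hFA]
      exact hcut Sᶜ hScne hrSc
    -- tightness
    set Tight : Finset V → Prop :=
      fun X => X.Nonempty ∧ r ∉ X ∧ inDeg tail head (A \ F) X < k with hTight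
    -- find a safe arc crossing from S to Sᶜ
    have hsafe : ∃ a ∈ A \ F, tail a ∈ S ∧ head a ∉ S ∧
        ∀ Y : Finset V, Tight Y → head a ∈ Y → tail a ∈ Y := by
      by_cases hT : ∃ X, Tight X ∧ (X \ S).Nonempty
      · set fam : Finset (Finset V) :=
          Finset.univ.filter (fun X => Tight X ∧ (X \ S).Nonempty) with hfam
        have hfamne : fam.Nonempty := by
          obtain ⟨X, hX⟩ := hT
          exact ⟨X, Finset.mem_filter.2 ⟨Finset.mem_univ _, hX⟩⟩
        obtain ⟨X, hXmem, hXmin⟩ := Finset.exists_min_image fam Finset.card hfamne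
        rw [hfam, Finset.mem_filter] at hXmem
        obtain ⟨-, hXt, hXSne⟩ := hXmem
        -- there is an arc from X ∩ S into X \ S
        have harc : ∃ a ∈ A \ F, tail a ∈ X ∩ S ∧ head a ∈ X \ S := by
          by_contra hno
          push_neg at hno
          have hsub : (A \ F).filter (fun a => tail a ∉ X \ S ∧ head a ∈ X \ S) ⊆
              (A \ F).filter (fun a => tail a ∉ X ∧ head a ∈ X) := by
            intro a ha
            rw [Finset.mem_filter] at ha ⊢
            refine ⟨ha.1, ?_, (Finset.mem_sdiff.1 ha.2.2).1⟩
            intro htX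
            have h1 : tail a ∉ X ∩ S := fun hc => hno a ha.1 hc ha.2.2
            have h2 : tail a ∉ X \ S := ha.2.1
            rw [Finset.mem_inter] at h1
            rw [Finset.mem_sdiff] at h2
            tauto
          have hc1 : inDeg tail head (A \ F) (X \ S) ≤ inDeg tail head (A \ F) X :=
            Finset.card_le_card hsub
          have hXsT : Tight (X \ S) := by
            refine ⟨hXSne, ?_, lt_of_le_of_lt hc1 hXt.2.2⟩
            intro hr'
            exact (Finset.mem_sdiff.1 hr').2 hrS
          have hXsfam : X \ S ∈ fam := by
            rw [hfam, Finset.mem_filter]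
            refine ⟨Finset.mem_univ _, hXsT, ?_⟩
            rwa [Finset.sdiff_idem]
          have hle := hXmin _ hXsfam
          have hXeq : X \ S = X :=
            Finset.eq_of_subset_of_card_le (Finset.sdiff_subset) (by omega)
          -- so X ∩ S = ∅, but some F-arc must enter X, impossible
          have hXS : ∀ x ∈ X, x ∉ S := by
            intro x hx hxS
            have : x ∈ X \ S := by rw [hXeq]; exact hx
            exact (Finset.mem_sdiff.1 this).2 hxS
          have : inDeg tail head (A \ F) X = inDeg tail head A X := by
            apply inDeg_eq_of_no_head _ hFA
            intro f hf hfX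
            exact hXS _ hfX (hFheadS f hf)
          have := hcut X hXt.1 hXt.2.1
          omega
        obtain ⟨a, ha, hta, hha⟩ := harc
        rw [Finset.mem_inter] at hta
        rw [Finset.mem_sdiff] at hha
        refine ⟨a, ha, hta.2, hha.2, ?_⟩
        intro Y hYt hhY
        by_contra htY
        -- Y ∩ X is tight and meets Sᶜ, contradicting minimality unless X ⊆ Y
        have hsub2 : inDeg tail head (A \ F) (Y ∩ X) < k := by
          have hsubm := inDeg_submod tail head (A \ F) Y X
          have hU : k - 1 ≤ inDeg tail head (A \ F) (Y ∪ X) := by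
            apply hinv
            · exact ⟨head a, Finset.mem_union_left _ hhY⟩
            · rw [Finset.mem_union]
              rintro (h | h)
              · exact hYt.2.1 h
              · exact hXt.2.1 h
          have := hYt.2.2
          have := hXt.2.2
          omega
        have hYXfam : Y ∩ X ∈ fam := by
          rw [hfam, Finset.mem_filter]
          refine ⟨Finset.mem_univ _, ⟨⟨head a, Finset.mem_inter.2 ⟨hhY, hha.1⟩⟩,
            fun hr' => hYt.2.1 (Finset.mem_inter.1 hr').1, hsub2⟩, ?_⟩
          exact ⟨head a, Finset.mem_sdiff.2 ⟨Finset.mem_inter.2 ⟨hhY, hha.1⟩, hha.2⟩⟩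
        have hle := hXmin _ hYXfam
        have : Y ∩ X = X := Finset.eq_of_subset_of_card_le (Finset.inter_subset_right) (by omega)
        exact htY (Finset.mem_inter.1 (this ▸ hta.1)).1
      · -- no tight set leaves S : any arc entering Sᶜ is safe
        push_neg at hT
        have h9 : ((A \ F).filter fun a => tail a ∉ Sᶜ ∧ head a ∈ Sᶜ).Nonempty :=
          Finset.card_pos.1 (le_trans hk hScdeg)
        obtain ⟨a, ha⟩ := h9
        rw [Finset.mem_filter] at ha
        refine ⟨a, ha.1, by simpa using ha.2.1, by simpa using ha.2.2, ?_⟩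
        intro Y hYt hhY
        exfalso
        have hhYS : head a ∈ Y \ S := Finset.mem_sdiff.2 ⟨hhY, by simpa using ha.2.2⟩
        exact (Finset.not_nonempty_iff_eq_empty.2 (hT Y hYt)) ⟨head a, hhYS⟩
    obtain ⟨a, haAF, htaS, hhaS, hsafety⟩ := hsafe
    rw [Finset.mem_sdiff] at haAF
    set S' := insert (head a) S with hS'
    set F' := insert a F with hF'
    have haF : a ∉ F := haAF.2
    have hvr : head a ≠ r := by
      intro h
      apply hhaS
      rw [h]
      exact hrS
    have harb' : IsArborescence tail head S' F' r := by
      refine ⟨Finset.mem_insert_of_mem hrS, ?_, ?_, ?_, ?_⟩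
      · intro f hf
        rw [hF', Finset.mem_insert] at hf
        rcases hf with rfl | hf
        · exact ⟨Finset.mem_insert_of_mem htaS, Finset.mem_insert_self _ _⟩
        · exact ⟨Finset.mem_insert_of_mem (hends f hf).1,
            Finset.mem_insert_of_mem (hends f hf).2⟩
      · intro f hf
        rw [hF', Finset.mem_insert] at hf
        rcases hf with rfl | hf
        · exact hvr
        · exact hheads f hf
      · intro w hw hwr
        rw [hS', Finset.mem_insert] at hw
        by_cases hwv : w = head a
        · have hempty : F.filter (fun f => head f = w) = ∅ := by
            rw [Finset.filter_eq_empty_iff]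
            intro f hf hfw
            apply hhaS
            rw [← hwv, ← hfw]
            exact hFheadS f hf
          rw [hF', Finset.filter_insert, if_pos hwv.symm, hempty]
          simp
        · have hwS : w ∈ S := by
            rcases hw with h | h
            · exact absurd h hwv
            · exact h
          rw [hF', Finset.filter_insert, if_neg (fun h => hwv h.symm)]
          exact hindeg w hwS hwr
      · intro w hw
        rw [hS', Finset.mem_insert] at hw
        rcases hw with rfl | hw
        · exact Relation.ReflTransGen.tail
            (DiReach_mono (Finset.subset_insert a F) (hreach _ htaS))
            ⟨a, Finset.mem_insert_self a F, rfl, rfl⟩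
        · exact DiReach_mono (Finset.subset_insert a F) (hreach w hw)
    have hinv' : ∀ X : Finset V, X.Nonempty → r ∉ X →
        k - 1 ≤ inDeg tail head (A \ F') X := by
      intro X hXne hXr
      have hAe : A \ F' = (A \ F).erase a := by
        rw [hF']
        ext x
        simp only [Finset.mem_sdiff, Finset.mem_erase, Finset.mem_insert]
        tauto
      rw [hAe]
      have hfe : (((A \ F).erase a).filter fun x => tail x ∉ X ∧ head x ∈ X)
          = ((A \ F).filter fun x => tail x ∉ X ∧ head x ∈ X).erase a := by
        ext x
        simp only [Finset.mem_filter, Finset.mem_erase]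
        tauto
      unfold inDeg
      rw [hfe]
      by_cases hmem : a ∈ (A \ F).filter fun x => tail x ∉ X ∧ head x ∈ X
      · -- a enters X, so X is not tight
        have hXnt : ¬ (inDeg tail head (A \ F) X < k) := by
          intro hlt
          have hfilter := Finset.mem_filter.1 hmem
          exact hfilter.2.1 (hsafety X ⟨hXne, hXr, hlt⟩ hfilter.2.2)
        push_neg at hXnt
        rw [Finset.card_erase_of_mem hmem]
        unfold inDeg at hXnt
        omega
      · rw [Finset.erase_eq_of_notMem hmem]
        exact hinv X hXne hXr
    have hcard : S'ᶜ.card = n := by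
      rw [hS', Finset.compl_insert, Finset.card_erase_of_mem (Finset.mem_compl.2 hhaS)]
      omega
    have hFA' : F' ⊆ A := by
      rw [hF']
      exact Finset.insert_subset haAF.1 hFA
    obtain ⟨F'', h1, h2, h3, h4⟩ := ih S' F' hcard hFA' harb' hinv'
    exact ⟨F'', le_trans (Finset.subset_insert a F) h1, h2, h3, h4⟩

theorem edmonds (tail head : α → V) (r : V) :
    ∀ (k : ℕ) (A : Finset α),
    (∀ X : Finset V, X.Nonempty → r ∉ X → k ≤ inDeg tail head A X) →
    ∃ T : Fin k → Finset α,
      (∀ i, T i ⊆ A ∧ IsArborescence tail head Finset.univ (T i) r) ∧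
      ∀ i j, i ≠ j → Disjoint (T i) (T j) := by
  intro k
  induction k with
  | zero =>
    intro A _
    exact ⟨fun i => i.elim0, fun i => i.elim0, fun i => i.elim0⟩
  | succ k ih =>
    intro A hcut
    have harb0 : IsArborescence tail head {r} (∅ : Finset α) r := by
      refine ⟨Finset.mem_singleton_self r, by simp, by simp, ?_, ?_⟩
      · intro w hw hwr
        exact absurd (Finset.mem_singleton.1 hw) hwr
      · intro w hw
        rw [Finset.mem_singleton.1 hw]
        exact Relation.ReflTransGen.refl
    have hinv0 : ∀ X : Finset V, X.Nonempty → r ∉ X →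
        (k + 1) - 1 ≤ inDeg tail head (A \ ∅) X := by
      intro X h1 h2
      rw [Finset.sdiff_empty]
      have := hcut X h1 h2
      omega
    obtain ⟨F', -, hF'A, hF'arb, hF'inv⟩ := grow tail head A (k+1) (by omega) r hcut
      ((({r} : Finset V))ᶜ.card) {r} ∅ rfl (Finset.empty_subset A) harb0 hinv0
    obtain ⟨T', hT'1, hT'2⟩ := ih (A \ F') (by
      intro X h1 h2
      have := hF'inv X h1 h2
      omega)
    refine ⟨Fin.cons F' T', ?_, ?_⟩
    · intro i
      rcases Fin.eq_zero_or_eq_succ i with rfl | ⟨i', rfl⟩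
      · rw [Fin.cons_zero]
        exact ⟨hF'A, hF'arb⟩
      · rw [Fin.cons_succ]
        exact ⟨le_trans (hT'1 i').1 (Finset.sdiff_subset), (hT'1 i').2⟩
    · intro i j hij
      rcases Fin.eq_zero_or_eq_succ i with rfl | ⟨i', rfl⟩ <;>
        rcases Fin.eq_zero_or_eq_succ j with rfl | ⟨j', rfl⟩
      · exact absurd rfl hij
      · rw [Fin.cons_zero, Fin.cons_succ]
        exact Finset.disjoint_of_subset_right (hT'1 j').1 Finset.disjoint_sdiff
      · rw [Fin.cons_zero, Fin.cons_succ]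
        exact Finset.disjoint_of_subset_left (hT'1 i').1 Finset.sdiff_disjoint
      · rw [Fin.cons_succ, Fin.cons_succ]
        exact hT'2 i' j' (fun h => hij (by rw [h]))

end Edmonds
section Main
attribute [local instance] Classical.propDecidable
set_option linter.unusedSectionVars false

variable {V α : Type} [Fintype V] [Fintype α]

theorem pack_spanning_arborescences' (tail head : α → V) [Nonempty V]
    (hloopless : ∀ a : α, tail a ≠ head a) (k : ℕ)
    (hnat : ∀ P : Finset (Finset V), IsSubpartition P → 1 < P.card →
      k * (P.card - 1) ≤ ∑ X ∈ P, inDeg tail head (Finset.univ : Finset α) X) :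
    ∃ (T : Fin k → Finset α) (rt : Fin k → V),
        (∀ i, IsArborescence tail head Finset.univ (T i) (rt i)) ∧
        ∀ i j, i ≠ j → Disjoint (T i) (T j) := by
  classical
  set A : Finset α := Finset.univ with hA
  -- initial bound for the token selection
  have hyp0 : ∀ P : Finset (Finset V), IsSubpartition P →
      ∑ X ∈ P, (k - wt tail head A (fun _ => 0) X) ≤ k := by
    intro P hP
    have hwt : ∀ X, wt tail head A (fun _ => 0) X = inDeg tail head A X := by
      intro X; simp [wt]
    set P' := P.filter (fun X => inDeg tail head A X < k) with hP'
    have hsum : ∑ X ∈ P, (k - wt tail head A (fun _ => 0) X)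
        = ∑ X ∈ P', (k - inDeg tail head A X) := by
      simp only [hwt]
      rw [hP', Finset.sum_filter_of_ne]
      intro X _ hne
      by_contra hlt
      push_neg at hlt
      omega
    rw [hsum]
    have hP'sub : IsSubpartition P' := subpartition_subset (Finset.filter_subset _ _) hP
    by_cases hc : 1 < P'.card
    · have hb := hnat P' hP'sub hc
      obtain ⟨c'', hc''⟩ : ∃ c'', P'.card = c'' + 1 := ⟨P'.card - 1, by omega⟩
      have hsplit : (∑ X ∈ P', (k - inDeg tail head A X)) +
          ∑ X ∈ P', inDeg tail head A X = k * P'.card := by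
        rw [← Finset.sum_add_distrib]
        have hcg : ∀ X ∈ P', (k - inDeg tail head A X) + inDeg tail head A X = k := by
          intro X hX
          have := (Finset.mem_filter.1 hX).2
          omega
        rw [Finset.sum_congr rfl hcg, Finset.sum_const, smul_eq_mul, Nat.mul_comm]
      have hmul : k * P'.card = k * (P'.card - 1) + k := by
        rw [hc'', Nat.add_sub_cancel, Nat.mul_succ]
      omega
    · -- at most one deficient set
      rcases Finset.card_le_one.1 (by omega : P'.card ≤ 1) with h
      by_cases hne : P'.Nonempty
      · obtain ⟨X, hX⟩ := hne
        have : P' = {X} := by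
          apply Finset.eq_singleton_iff_unique_mem.2
          exact ⟨hX, fun Y hY => h Y hY X hX⟩
        rw [this, Finset.sum_singleton]
        omega
      · rw [Finset.not_nonempty_iff_eq_empty.1 hne]
        simp
  obtain ⟨t', -, hsumt', hdem⟩ := token_selection tail head A k k (fun _ => 0) hyp0
  have htot : ∑ v : V, t' v = k := by
    simpa using hsumt'
  -- the auxiliary digraph on `Option V`
  set tl : α ⊕ ((v : V) × Fin (t' v)) → Option V := Sum.elim (fun a => some (tail a)) (fun _ => none) with htl
  set hd : α ⊕ ((v : V) × Fin (t' v)) → Option V := Sum.elim (fun a => some (head a)) (fun p => some p.1) with hhd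
  -- the cut condition in the auxiliary digraph
  have hcut : ∀ X : Finset (Option V), X.Nonempty → none ∉ X →
      k ≤ inDeg tl hd (Finset.univ : Finset (α ⊕ ((v : V) × Fin (t' v)))) X := by
    intro X hXne hXnone
    set X₀ : Finset V := Finset.univ.filter (fun v => some v ∈ X) with hX₀
    have hmemX₀ : ∀ v, v ∈ X₀ ↔ some v ∈ X := by
      intro v; simp [hX₀]
    have hX₀ne : X₀.Nonempty := by
      obtain ⟨x, hx⟩ := hXne
      match x with
      | none => exact absurd hx hXnone
      | some v => exact ⟨v, (hmemX₀ v).2 hx⟩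
    have hsplit : inDeg tl hd (Finset.univ : Finset (α ⊕ ((v : V) × Fin (t' v)))) X =
        (Finset.univ.filter (fun a : α => tail a ∉ X₀ ∧ head a ∈ X₀)).card +
        (Finset.univ.filter (fun p : (v : V) × Fin (t' v) => p.1 ∈ X₀)).card := by
      unfold inDeg
      rw [Finset.card_filter, Finset.card_filter, Finset.card_filter,
        Fintype.sum_sum_type]
      congr 1
      · apply Finset.sum_congr rfl
        intro a _
        have e1 : (tl (Sum.inl a) ∉ X ∧ hd (Sum.inl a) ∈ X) ↔
            (tail a ∉ X₀ ∧ head a ∈ X₀) := by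
          rw [htl, hhd]
          simp only [Sum.elim_inl, hmemX₀]
        by_cases h : tl (Sum.inl a) ∉ X ∧ hd (Sum.inl a) ∈ X
        · rw [if_pos h, if_pos (e1.1 h)]
        · rw [if_neg h, if_neg (fun hh => h (e1.2 hh))]
      · apply Finset.sum_congr rfl
        intro p _
        have e1 : (tl (Sum.inr p) ∉ X ∧ hd (Sum.inr p) ∈ X) ↔ p.1 ∈ X₀ := by
          rw [htl, hhd]
          simp only [Sum.elim_inr, hmemX₀]
          tauto
        by_cases h : tl (Sum.inr p) ∉ X ∧ hd (Sum.inr p) ∈ X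
        · rw [if_pos h, if_pos (e1.1 h)]
        · rw [if_neg h, if_neg (fun hh => h (e1.2 hh))]
    have htokcard : (Finset.univ.filter (fun p : (v : V) × Fin (t' v) => p.1 ∈ X₀)).card
        = ∑ v ∈ X₀, t' v := by
      have e2 : (Finset.univ.filter (fun p : (v : V) × Fin (t' v) => p.1 ∈ X₀))
          = X₀.sigma (fun v => (Finset.univ : Finset (Fin (t' v)))) := by
        ext ⟨v, j⟩
        simp only [Finset.mem_filter, Finset.mem_univ, true_and]
        constructor
        · intro h
          exact Finset.mem_sigma.2 ⟨h, Finset.mem_univ _⟩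
        · intro h
          exact (Finset.mem_sigma.1 h).1
      rw [e2, Finset.card_sigma]
      simp
    have := hdem X₀ hX₀ne
    rw [hsplit, htokcard]
    simp only [wt] at this
    exact this
  obtain ⟨T', hT'1, hT'2⟩ := edmonds tl hd none k Finset.univ hcut
  -- each auxiliary arborescence contains exactly one token arc
  set tok : Fin k → Finset ((v : V) × Fin (t' v)) := fun i => Finset.univ.filter (fun p => Sum.inr p ∈ T' i)
    with htok
  have htokone : ∀ i, 1 ≤ (tok i).card := by
    intro i
    obtain ⟨v0⟩ := ‹Nonempty V›
    obtain ⟨-, -, -, -, hreach⟩ := (hT'1 i).2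
    have := hreach (some v0) (Finset.mem_univ _)
    rcases Relation.ReflTransGen.cases_head this with h | ⟨c, hstep, -⟩
    · exact absurd h (by simp)
    · obtain ⟨b, hb, hbt, -⟩ := hstep
      match b with
      | Sum.inl a => exact absurd hbt (by simp [htl])
      | Sum.inr p =>
          exact Finset.card_pos.2 ⟨p, Finset.mem_filter.2 ⟨Finset.mem_univ _, hb⟩⟩
  have htoksum : ∑ i, (tok i).card ≤ k := by
    have hdisj : ∀ i j, i ≠ j → Disjoint (tok i) (tok j) := by
      intro i j hij
      rw [Finset.disjoint_left]
      intro p hp hq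
      rw [htok, Finset.mem_filter] at hp hq
      exact Finset.disjoint_left.1 (hT'2 i j hij) hp.2 hq.2
    rw [← Finset.card_biUnion (fun i _ => fun j _ hij => hdisj i j hij)]
    calc (Finset.univ.biUnion tok).card ≤ (Finset.univ : Finset ((v : V) × Fin (t' v))).card :=
          Finset.card_le_card (Finset.subset_univ _)
      _ = ∑ v : V, t' v := by
          rw [Finset.card_univ, Fintype.card_sigma]
          simp
      _ = k := htot
  have htokcard1 : ∀ i, (tok i).card = 1 := by
    intro i
    by_contra hne
    have h2 : 2 ≤ (tok i).card := by
      have := htokone i; omega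
    have : ∑ j : Fin k, 1 < ∑ j, (tok j).card :=
      Finset.sum_lt_sum (fun j _ => htokone j) ⟨i, Finset.mem_univ _, by omega⟩
    simp at this
    omega
  -- extract original arborescences
  have hpick : ∀ i, ∃ p : (v : V) × Fin (t' v), tok i = {p} := fun i => Finset.card_eq_one.1 (htokcard1 i)
  set pk : Fin k → ((v : V) × Fin (t' v)) := fun i => (hpick i).choose with hpk
  have hpkmem : ∀ i, Sum.inr (pk i) ∈ T' i := by
    intro i
    have := (hpick i).choose_spec
    have h2 : pk i ∈ tok i := by rw [hpk, this]; exact Finset.mem_singleton_self _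
    exact (Finset.mem_filter.1 h2).2
  have hpkuniq : ∀ i (q : (v : V) × Fin (t' v)), Sum.inr q ∈ T' i → q = pk i := by
    intro i q hq
    have h2 : q ∈ tok i := Finset.mem_filter.2 ⟨Finset.mem_univ _, hq⟩
    rw [(hpick i).choose_spec] at h2
    exact Finset.mem_singleton.1 h2
  set T : Fin k → Finset α := fun i => Finset.univ.filter (fun a => Sum.inl a ∈ T' i)
    with hT
  set rt : Fin k → V := fun i => (pk i).1 with hrt
  have hmemT : ∀ i a, a ∈ T i ↔ Sum.inl a ∈ T' i := by
    intro i a; simp [hT]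
  refine ⟨T, rt, ?_, ?_⟩
  · intro i
    obtain ⟨-, -, hheads, hindeg, hreach⟩ := (hT'1 i).2
    refine ⟨Finset.mem_univ _, fun a _ => ⟨Finset.mem_univ _, Finset.mem_univ _⟩, ?_, ?_, ?_⟩
    · -- no arc of T i points at the root rt i
      intro a ha hhead
      have h1 : Sum.inl a ∈ T' i := (hmemT i a).1 ha
      have h2 : Sum.inr (pk i) ∈ T' i := hpkmem i
      have hc := hindeg (some (rt i)) (Finset.mem_univ _) (by simp)
      have hcle := Finset.card_le_one.1 (le_of_eq hc)
      have heq2 := hcle (Sum.inl a)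
        (by simp only [Finset.mem_filter]; exact ⟨h1, by rw [hhd]; simp [hhead]⟩)
        (Sum.inr (pk i))
        (by simp only [Finset.mem_filter]; exact ⟨h2, by rw [hhd, hrt]; simp⟩)
      simp at heq2
    · -- in-degree one for non-roots
      intro v _ hvr
      have hc := hindeg (some v) (Finset.mem_univ _) (by simp)
      rw [← hc]
      apply Finset.card_bij (fun (a : α) _ => (Sum.inl a : α ⊕ ((v : V) × Fin (t' v))))
      · intro a ha
        simp only [Finset.mem_filter] at ha ⊢
        refine ⟨(hmemT i a).1 ha.1, ?_⟩
        rw [hhd]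
        simp [ha.2]
      · intro a _ a' _ hee
        injection hee
      · intro b hb
        simp only [Finset.mem_filter] at hb
        match b with
        | Sum.inl a =>
          refine ⟨a, ?_, rfl⟩
          simp only [Finset.mem_filter]
          have hcond := hb.2
          rw [hhd] at hcond
          simp only [Sum.elim_inl, Option.some_inj] at hcond
          exact ⟨(hmemT i a).2 hb.1, hcond⟩
        | Sum.inr q =>
          exfalso
          have hqq := hpkuniq i q hb.1
          subst hqq
          have hcond := hb.2
          rw [hhd] at hcond
          simp only [Sum.elim_inr, Option.some_inj] at hcond
          exact hvr (by rw [hrt, ← hcond])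

    · -- reachability
      intro v _
      -- project auxiliary reachability to the original digraph
      have hproj : ∀ (x : V) (z : Option V),
          Relation.ReflTransGen (DiStep tl hd (T' i)) (some x) z →
          ∃ y : V, z = some y ∧ DiReach tail head (T i) x y := by
        intro x z hz
        induction hz with
        | refl => exact ⟨x, rfl, Relation.ReflTransGen.refl⟩
        | @tail b c hr hstep ih =>
          obtain ⟨y, rfl, hy⟩ := ih
          obtain ⟨arc, harc, ht1, ht2⟩ := hstep
          match arc with
          | Sum.inl a =>
            rw [htl] at ht1
            simp only [Sum.elim_inl, Option.some_inj] at ht1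
            rw [hhd] at ht2
            simp only [Sum.elim_inl] at ht2
            refine ⟨head a, ht2.symm, Relation.ReflTransGen.tail hy ?_⟩
            exact ⟨a, Finset.mem_filter.2 ⟨Finset.mem_univ _, harc⟩, ht1, rfl⟩
          | Sum.inr q =>
            rw [htl] at ht1
            simp at ht1
      obtain ⟨-, -, -, -, hreach'⟩ := (hT'1 i).2
      have h0 := hreach' (some v) (Finset.mem_univ _)
      rcases Relation.ReflTransGen.cases_head h0 with h | ⟨c, hstep, htail⟩
      · exact absurd h (by simp)
      · obtain ⟨b, hb, hbt, hbh⟩ := hstep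
        match b with
        | Sum.inl a => exact absurd hbt (by simp [htl])
        | Sum.inr q =>
          have hq : q = pk i := hpkuniq i q hb
          subst hq
          have hc : c = some (rt i) := by
            rw [← hbh, hhd, hrt]
            simp
          subst hc
          obtain ⟨y, hy1, hy2⟩ := hproj (rt i) (some v) htail
          injection hy1 with hy1'
          subst hy1'
          exact hy2
  · intro i j hij
    rw [Finset.disjoint_left]
    intro a ha hb
    exact Finset.disjoint_left.1 (hT'2 i j hij) ((hmemT i a).1 ha) ((hmemT j a).1 hb)

end Main
/-- **Frank's theorem.**  A digraph `D` contains `k` pairwise arc-disjoint spanning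
arborescences if and only if `ν_f(D) ≥ k`, i.e. iff
`(∑_{X∈P} d_A^-(X)) / (|P| - 1) ≥ k` for every subpartition `P` of `V` with `|P| > 1`. -/
theorem pack_spanning_arborescences {V α : Type} [Fintype V] [Nonempty V] [Fintype α]
    (tail head : α → V) (hloopless : ∀ a : α, tail a ≠ head a) (k : ℕ) :
    (∃ (T : Fin k → Finset α) (rt : Fin k → V),
        (∀ i, IsArborescence tail head Finset.univ (T i) (rt i)) ∧
        ∀ i j, i ≠ j → Disjoint (T i) (T j)) ↔
    (∀ P : Finset (Finset V), IsSubpartition P → 1 < P.card →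
      (k : ℚ) ≤ (∑ X ∈ P, (inDeg tail head (Finset.univ : Finset α) X : ℚ)) /
        ((P.card : ℚ) - 1)) := by
  classical
  constructor
  · rintro ⟨T, rt, harb, hdisj⟩ P hP hcard
    have hnat := easy_core tail head k T rt harb hdisj P hP
    have h2 : (2:ℚ) ≤ (P.card : ℚ) := by exact_mod_cast hcard
    rw [le_div_iff₀ (by linarith)]
    have hcast : ((k * (P.card - 1) : ℕ) : ℚ) = (k : ℚ) * ((P.card : ℚ) - 1) := by
      rw [Nat.cast_mul, Nat.cast_sub (by omega : 1 ≤ P.card)]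
      norm_num
    calc (k:ℚ) * ((P.card:ℚ) - 1) = ((k * (P.card - 1) : ℕ) : ℚ) := hcast.symm
      _ ≤ ((∑ X ∈ P, inDeg tail head (Finset.univ : Finset α) X : ℕ) : ℚ) := by
          exact_mod_cast hnat
      _ = ∑ X ∈ P, (inDeg tail head (Finset.univ : Finset α) X : ℚ) := by
          push_cast
          rfl
  · intro hfrac
    apply pack_spanning_arborescences' tail head hloopless k
    intro P hP hcard
    have h := hfrac P hP hcard
    have h2 : (2:ℚ) ≤ (P.card : ℚ) := by exact_mod_cast hcard
    rw [le_div_iff₀ (by linarith)] at h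
    have hcast : ((k * (P.card - 1) : ℕ) : ℚ) = (k : ℚ) * ((P.card : ℚ) - 1) := by
      rw [Nat.cast_mul, Nat.cast_sub (by omega : 1 ≤ P.card)]
      norm_num
    have h3 : ((k * (P.card - 1) : ℕ) : ℚ) ≤
        ((∑ X ∈ P, inDeg tail head (Finset.univ : Finset α) X : ℕ) : ℚ) := by
      rw [hcast]
      calc (k : ℚ) * ((P.card : ℚ) - 1)
          ≤ ∑ X ∈ P, (inDeg tail head (Finset.univ : Finset α) X : ℚ) := h
        _ = _ := by push_cast; rfl
    exact_mod_cast h3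
end
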